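/- arXiv:1103.5454 — 4 statements merged into one kernel-verified Lean document; each statement's English description precedes it below -/
import Mathlib

section
/- Let F be defined away from {ζ=0} by F = F₀ − (1/β − 1)·log ρ − log( Σ_{m=0}^{n−1} a_m |ζ|^{2βm} + |ζ|^{2−2β} Σ_{m=0}^{n} b_m |ζ|^{2βm} ), and extended to {ζ=0} by F = F₀ − (1/β − 1)·log ρ − log a₀. Then there exist r > 0 and C > 0 such that the argument of the logarithm is positive on the ball B_r(0) ⊆ ℂⁿ and F is Hölder continuous with exponent 2β there: |F(p) − F(q)| ≤ C·|p − q|^{2β} for all p, q ∈ B_r(0). -/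
/-!
STATEMENT 0: Hölder continuity (with exponent 2β) of the Ricci potential
F = F₀ − (1/β − 1)·log ρ − log( Σ_{m=0}^{n−1} a_m |ζ|^{2βm} + |ζ|^{2−2β} Σ_{m=0}^{n} b_m |ζ|^{2βm} )
of the background edge metric, extended across {ζ = 0} by
F = F₀ − (1/β − 1)·log ρ − log a₀.
Here the paper's dimension n ≥ 1 is rendered as `n + 1` for `n : ℕ`, the coordinates
are points of `EuclideanSpace ℂ (Fin (n+1))`, and ζ is the last coordinate.
-/

noncomputable section

open Complex Metric Finset

section HolderHelpers

lemma holder_coord_le {k : ℕ} (p : EuclideanSpace ℂ (Fin k)) (i : Fin k) : ‖p i‖ ≤ ‖p‖ := by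
  rw [EuclideanSpace.norm_eq]
  have h1 : ‖p i‖ = Real.sqrt (‖p i‖ ^ 2) := (Real.sqrt_sq (norm_nonneg _)).symm
  rw [h1]
  apply Real.sqrt_le_sqrt
  exact Finset.single_le_sum (fun j _ => sq_nonneg ‖p j‖) (Finset.mem_univ i)

lemma holder_rpow_subadd {x y η : ℝ} (hy : 0 ≤ y) (hxy : y ≤ x) (hη : 0 ≤ η) (hη1 : η ≤ 1) :
    x ^ η ≤ y ^ η + (x - y) ^ η := by
  have hx : 0 ≤ x := hy.trans hxy
  have h1 : y.toNNReal + (x - y).toNNReal = x.toNNReal := by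
    rw [← Real.toNNReal_add hy (by linarith)]
    congr 1; ring
  have h2 := NNReal.rpow_add_le_add_rpow y.toNNReal ((x - y).toNNReal) hη hη1
  rw [h1] at h2
  have h3 := (NNReal.coe_le_coe.2 h2)
  simpa [NNReal.coe_rpow, Real.coe_toNNReal _ hx, Real.coe_toNNReal _ hy,
    Real.coe_toNNReal _ (sub_nonneg.2 hxy)] using h3

lemma holder_abs_rpow_sub {x y η : ℝ} (hx : 0 ≤ x) (hy : 0 ≤ y) (hη : 0 ≤ η) (hη1 : η ≤ 1) :
    |x ^ η - y ^ η| ≤ |x - y| ^ η := by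
  rcases le_total y x with h | h
  · rw [_root_.abs_of_nonneg (by linarith : (0:ℝ) ≤ x - y),
      _root_.abs_of_nonneg (sub_nonneg.2 (Real.rpow_le_rpow hy h hη))]
    linarith [holder_rpow_subadd hy h hη hη1]
  · rw [_root_.abs_of_nonpos (by linarith : x - y ≤ 0),
      _root_.abs_of_nonpos (sub_nonpos.2 (Real.rpow_le_rpow hx h hη))]
    have := holder_rpow_subadd hx h hη hη1
    have h2 : -(x - y) = y - x := by ring
    rw [h2]; linarith

lemma holder_rpow_lip {x y α : ℝ} (hy : 0 ≤ y) (hxy : y ≤ x) (hx1 : x ≤ 1) (hα : 1 ≤ α) :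
    x ^ α - y ^ α ≤ α * (x - y) := by
  have hx : 0 ≤ x := hy.trans hxy
  rcases eq_or_lt_of_le hx with h0 | h0
  · have hy0 : y = 0 := le_antisymm (hxy.trans h0.symm.le) hy
    have hx0 : x = 0 := h0.symm
    rw [hx0, hy0, Real.zero_rpow (by linarith : α ≠ 0)]
    simp
  · have hs : -1 ≤ y / x - 1 := by
      have : 0 ≤ y / x := div_nonneg hy hx
      linarith
    have hB := one_add_mul_self_le_rpow_one_add hs hα
    have h1 : (1 : ℝ) + (y / x - 1) = y / x := by ring
    rw [h1] at hB
    have h2 : (y / x) ^ α = y ^ α / x ^ α := Real.div_rpow hy hx α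
    rw [h2] at hB
    have hxα : 0 < x ^ α := Real.rpow_pos_of_pos h0 α
    have h3 : (1 + α * (y / x - 1)) * x ^ α ≤ y ^ α :=
      (le_div_iff₀ hxα).mp hB
    have hxαx : x ^ α ≤ x := by
      have := Real.rpow_le_rpow_of_exponent_ge h0 hx1 hα
      simpa using this
    -- x^α - y^α ≤ α * (1 - y/x) * x^α ≤ α * (1 - y/x) * x = α (x - y)
    have h4 : x ^ α - y ^ α ≤ α * (1 - y / x) * x ^ α := by nlinarith
    have h5 : 0 ≤ 1 - y / x := by
      have : y / x ≤ 1 := (div_le_one h0).2 hxy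
      linarith
    have h6 : α * (1 - y / x) * x ^ α ≤ α * (1 - y / x) * x := by
      apply mul_le_mul_of_nonneg_left hxαx
      positivity
    have h7 : α * (1 - y / x) * x = α * (x - y) := by
      field_simp
    linarith

lemma holder_abs_rpow_lip {x y α : ℝ} (hx : 0 ≤ x) (hx1 : x ≤ 1) (hy : 0 ≤ y) (hy1 : y ≤ 1)
    (hα : 1 ≤ α) : |x ^ α - y ^ α| ≤ α * |x - y| := by
  rcases le_total y x with h | h
  · rw [_root_.abs_of_nonneg (by linarith : (0:ℝ) ≤ x - y), _root_.abs_of_nonneg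
      (sub_nonneg.2 (Real.rpow_le_rpow hy h (by linarith)))]
    exact holder_rpow_lip hy h hx1 hα
  · rw [_root_.abs_of_nonpos (by linarith : x - y ≤ 0), _root_.abs_of_nonpos
      (sub_nonpos.2 (Real.rpow_le_rpow hx h (by linarith)))]
    have := holder_rpow_lip hx h hy1 hα
    have e : -(x - y) = y - x := by ring
    rw [e]; linarith

lemma holder_abs_pow_sub {x y : ℝ} (m : ℕ) (hx : 0 ≤ x) (hx1 : x ≤ 1) (hy : 0 ≤ y)
    (hy1 : y ≤ 1) : |x ^ m - y ^ m| ≤ m * |x - y| := by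
  induction m with
  | zero => simp
  | succ k ih =>
    have e : x ^ (k+1) - y ^ (k+1) = x ^ k * (x - y) + y * (x ^ k - y ^ k) := by ring
    calc |x ^ (k+1) - y ^ (k+1)| ≤ |x ^ k * (x - y)| + |y * (x ^ k - y ^ k)| := by
          rw [e]; exact abs_add_le _ _
      _ ≤ 1 * |x - y| + 1 * (k * |x - y|) := by
          rw [abs_mul, abs_mul]
          gcongr
          · rw [_root_.abs_of_nonneg (pow_nonneg hx k)]; exact pow_le_one₀ hx hx1
          · rwa [_root_.abs_of_nonneg hy]
      _ = (k + 1 : ℕ) * |x - y| := by push_cast; ring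

lemma holder_abs_log_sub {x y c : ℝ} (hc : 0 < c) (hx : c ≤ x) (hy : c ≤ y) :
    |Real.log x - Real.log y| ≤ |x - y| / c := by
  have hx0 : 0 < x := hc.trans_le hx
  have hy0 : 0 < y := hc.trans_le hy
  have key : ∀ u v : ℝ, c ≤ u → c ≤ v → v ≤ u → Real.log u - Real.log v ≤ (u - v) / c := by
    intro u v hu hv huv
    have hu0 : 0 < u := hc.trans_le hu
    have hv0 : 0 < v := hc.trans_le hv
    have h1 : Real.log u - Real.log v = Real.log (u / v) := (Real.log_div hu0.ne' hv0.ne').symm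
    rw [h1]
    have h2 := Real.log_le_sub_one_of_pos (div_pos hu0 hv0)
    have h3 : u / v - 1 = (u - v) / v := by field_simp
    have h4 : (u - v) / v ≤ (u - v) / c := by
      apply div_le_div_of_nonneg_left (by linarith) hc hv
    linarith
  rcases le_total y x with h | h
  · rw [_root_.abs_of_nonneg (by linarith : (0:ℝ) ≤ x - y),
      _root_.abs_of_nonneg (sub_nonneg.2 (Real.log_le_log hy0 h))]
    exact key x y hx hy h
  · rw [_root_.abs_of_nonpos (by linarith : x - y ≤ 0),
      _root_.abs_of_nonpos (sub_nonpos.2 (Real.log_le_log hx0 h))]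
    have := key y x hy hx h
    have e : -(x - y) = y - x := by ring
    rw [e]; linarith

end HolderHelpers

set_option maxHeartbeats 2000000 in
theorem ricci_potential_holder_continuous
    (n : ℕ) (β : ℝ) (hβ : β ∈ Set.Ioo (0 : ℝ) (1/2))
    (U : Set (EuclideanSpace ℂ (Fin (n+1)))) (hU : IsOpen U)
    (h0U : (0 : EuclideanSpace ℂ (Fin (n+1))) ∈ U)
    (F₀ ρ : EuclideanSpace ℂ (Fin (n+1)) → ℝ)
    (a : Fin (n+1) → EuclideanSpace ℂ (Fin (n+1)) → ℝ)
    (b : Fin (n+2) → EuclideanSpace ℂ (Fin (n+1)) → ℝ)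
    (hF₀ : ContDiffOn ℝ (⊤ : ℕ∞) F₀ U) (hρ : ContDiffOn ℝ (⊤ : ℕ∞) ρ U)
    (ha : ∀ m, ContDiffOn ℝ (⊤ : ℕ∞) (a m) U) (hb : ∀ m, ContDiffOn ℝ (⊤ : ℕ∞) (b m) U)
    (hρpos : ∀ p ∈ U, 0 < ρ p) (ha0 : ∀ p ∈ U, 0 < a 0 p)
    -- A is the argument of the logarithm
    (A : EuclideanSpace ℂ (Fin (n+1)) → ℝ)
    (hA : ∀ p, A p =
      (∑ m : Fin (n+1), a m p * ‖p (Fin.last n)‖ ^ (2*β*(m:ℝ)))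
      + ‖p (Fin.last n)‖ ^ (2-2*β) * ∑ m : Fin (n+2), b m p * ‖p (Fin.last n)‖ ^ (2*β*(m:ℝ)))
    -- F is defined away from {ζ = 0} by the formula, and extended across {ζ = 0}
    (F : EuclideanSpace ℂ (Fin (n+1)) → ℝ)
    (hF : ∀ p ∈ U, p (Fin.last n) ≠ 0 →
      F p = F₀ p - (1/β - 1) * Real.log (ρ p) - Real.log (A p))
    (hFext : ∀ p ∈ U, p (Fin.last n) = 0 →
      F p = F₀ p - (1/β - 1) * Real.log (ρ p) - Real.log (a 0 p)) :
    ∃ r > (0:ℝ), ∃ C > (0:ℝ),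
      Metric.ball (0 : EuclideanSpace ℂ (Fin (n+1))) r ⊆ U ∧
      (∀ p ∈ Metric.ball (0 : EuclideanSpace ℂ (Fin (n+1))) r, 0 < A p) ∧
      (∀ p ∈ Metric.ball (0 : EuclideanSpace ℂ (Fin (n+1))) r,
        ∀ q ∈ Metric.ball (0 : EuclideanSpace ℂ (Fin (n+1))) r,
          |F p - F q| ≤ C * ‖p - q‖ ^ (2*β)) := by
  obtain ⟨hβ0, hβ2⟩ := hβ
  have h2β0 : 0 < 2*β := by linarith
  have h2β1 : 2*β < 1 := by linarith
  -- A equals a 0 on the divisor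
  have hAzero : ∀ p : EuclideanSpace ℂ (Fin (n+1)), p (Fin.last n) = 0 → A p = a 0 p := by
    intro p hp
    rw [hA p, hp]
    have h1 : ((0:ℝ)) ^ (2-2*β) = 0 := Real.zero_rpow (by intro h; nlinarith)
    rw [norm_zero, h1, zero_mul, add_zero]
    rw [Finset.sum_eq_single (0 : Fin (n+1))]
    · norm_num
    · intro m _ hm
      have hmpos : 0 < (m : ℕ) := Nat.pos_of_ne_zero (fun h => hm (by ext; simpa using h))
      have hmr : (0:ℝ) < (m : ℝ) := by exact_mod_cast hmpos
      rw [Real.zero_rpow (by positivity), mul_zero]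
    · intro h; exact absurd (Finset.mem_univ _) h
  -- Lipschitz data near 0
  have lipgen : ∀ f : EuclideanSpace ℂ (Fin (n+1)) → ℝ, ContDiffOn ℝ (⊤ : ℕ∞) f U →
      ∃ K : NNReal, ∃ t ∈ nhds (0 : EuclideanSpace ℂ (Fin (n+1))), LipschitzOnWith K f t := by
    intro f hf
    exact ((hf.contDiffAt (hU.mem_nhds h0U)).of_le (by simp)).exists_lipschitzOnWith
  obtain ⟨KF, tF, htF, hlF⟩ := lipgen F₀ hF₀
  obtain ⟨Kρ, tρ, htρ, hlρ⟩ := lipgen ρ hρ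
  choose Ka ta hta hla using fun m => lipgen (a m) (ha m)
  choose Kb tb htb hlb using fun m => lipgen (b m) (hb m)
  obtain ⟨ε, hε, hεU⟩ := Metric.isOpen_iff.1 hU 0 h0U
  have hT : (tF ∩ tρ ∩ (⋂ m, ta m) ∩ (⋂ m, tb m)) ∈
      nhds (0 : EuclideanSpace ℂ (Fin (n+1))) := by
    refine Filter.inter_mem (Filter.inter_mem (Filter.inter_mem htF htρ) ?_) ?_
    · exact Filter.iInter_mem.2 hta
    · exact Filter.iInter_mem.2 htb
  obtain ⟨r₂, hr₂pos, hr₂⟩ := Metric.mem_nhds_iff.1 hT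
  set r₁ : ℝ := min (min ε r₂) (1/2) with hr₁def
  have hr₁pos : 0 < r₁ := lt_min (lt_min hε hr₂pos) (by norm_num)
  have hr₁half : r₁ ≤ 1/2 := min_le_right _ _
  set B₁ := Metric.ball (0 : EuclideanSpace ℂ (Fin (n+1))) r₁ with hB₁def
  have hB₁U : B₁ ⊆ U :=
    (Metric.ball_subset_ball ((min_le_left _ _).trans (min_le_left _ _))).trans hεU
  have hB₁T : B₁ ⊆ tF ∩ tρ ∩ (⋂ m, ta m) ∩ (⋂ m, tb m) :=
    (Metric.ball_subset_ball ((min_le_left _ _).trans (min_le_right _ _))).trans hr₂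
  have hmemF : ∀ p ∈ B₁, p ∈ tF := fun p hp => (hB₁T hp).1.1.1
  have hmemρ : ∀ p ∈ B₁, p ∈ tρ := fun p hp => (hB₁T hp).1.1.2
  have hmema : ∀ p ∈ B₁, ∀ m, p ∈ ta m := fun p hp => Set.mem_iInter.1 (hB₁T hp).1.2
  have hmemb : ∀ p ∈ B₁, ∀ m, p ∈ tb m := fun p hp => Set.mem_iInter.1 (hB₁T hp).2
  have h0B₁ : (0 : EuclideanSpace ℂ (Fin (n+1))) ∈ B₁ := Metric.mem_ball_self hr₁pos
  have hnorml : ∀ p ∈ B₁, ‖p‖ ≤ 1 := by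
    intro p hp
    have := mem_ball_zero_iff.1 hp
    linarith
  -- Lipschitz in |·| form
  have lipabs : ∀ (K : NNReal) (t : Set (EuclideanSpace ℂ (Fin (n+1))))
      (f : EuclideanSpace ℂ (Fin (n+1)) → ℝ), LipschitzOnWith K f t → ∀ p ∈ t, ∀ q ∈ t,
      |f p - f q| ≤ K * ‖p - q‖ := by
    intro K t f hl p hp q hq
    have := hl.dist_le_mul p hp q hq
    rwa [Real.dist_eq, dist_eq_norm] at this
  -- uniform bounds on B₁
  set Na : Fin (n+1) → ℝ := fun m => |a m 0| + Ka m with hNadef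
  set Nb : Fin (n+2) → ℝ := fun m => |b m 0| + Kb m with hNbdef
  have hNa : ∀ p ∈ B₁, ∀ m, |a m p| ≤ Na m := by
    intro p hp m
    have h1 := lipabs _ _ _ (hla m) p (hmema p hp m) 0 (hmema 0 h0B₁ m)
    have h2 : ‖p - 0‖ ≤ 1 := by rw [sub_zero]; exact hnorml p hp
    have h3 : |a m p| ≤ |a m 0| + |a m p - a m 0| := by
      have := abs_sub_abs_le_abs_sub (a m p) (a m 0); linarith [abs_nonneg (a m p - a m 0)]
    have h4 : (Ka m : ℝ) * ‖p - 0‖ ≤ Ka m := by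
      calc (Ka m : ℝ) * ‖p - 0‖ ≤ Ka m * 1 := by
            apply mul_le_mul_of_nonneg_left h2 (Ka m).coe_nonneg
        _ = Ka m := mul_one _
    simp only [hNadef]
    linarith
  have hNb : ∀ p ∈ B₁, ∀ m, |b m p| ≤ Nb m := by
    intro p hp m
    have h1 := lipabs _ _ _ (hlb m) p (hmemb p hp m) 0 (hmemb 0 h0B₁ m)
    have h2 : ‖p - 0‖ ≤ 1 := by rw [sub_zero]; exact hnorml p hp
    have h3 : |b m p| ≤ |b m 0| + |b m p - b m 0| := by
      have := abs_sub_abs_le_abs_sub (b m p) (b m 0); linarith [abs_nonneg (b m p - b m 0)]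
    have h4 : (Kb m : ℝ) * ‖p - 0‖ ≤ Kb m := by
      calc (Kb m : ℝ) * ‖p - 0‖ ≤ Kb m * 1 := by
            apply mul_le_mul_of_nonneg_left h2 (Kb m).coe_nonneg
        _ = Kb m := mul_one _
    simp only [hNbdef]
    linarith
  have hNa0 : ∀ m, 0 ≤ Na m := fun m => add_nonneg (abs_nonneg _) (Ka m).coe_nonneg
  have hNb0 : ∀ m, 0 ≤ Nb m := fun m => add_nonneg (abs_nonneg _) (Kb m).coe_nonneg
  -- the constant for A
  set CA : ℝ := (∑ m : Fin (n+1), (Na m * (n+1) + Ka m)) +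
      ((∑ m : Fin (n+2), (Nb m * (n+2) + Kb m)) + 2 * ∑ m : Fin (n+2), Nb m) with hCAdef
  have hCA0 : 0 ≤ CA := by
    apply add_nonneg
    · apply Finset.sum_nonneg
      intro m _
      have := hNa0 m
      positivity
    · apply add_nonneg
      · apply Finset.sum_nonneg
        intro m _
        have := hNb0 m
        positivity
      · have : 0 ≤ ∑ m : Fin (n+2), Nb m := Finset.sum_nonneg fun m _ => hNb0 m
        positivity
  -- rewrite A with natural powers
  have hArw : ∀ x : EuclideanSpace ℂ (Fin (n+1)), A x =
      (∑ m : Fin (n+1), a m x * (‖x (Fin.last n)‖ ^ (2*β)) ^ (m:ℕ)) +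
      ‖x (Fin.last n)‖ ^ (2-2*β) *
        ∑ m : Fin (n+2), b m x * (‖x (Fin.last n)‖ ^ (2*β)) ^ (m:ℕ) := by
    intro x
    rw [hA x]
    congr 1
    · refine Finset.sum_congr rfl fun m _ => ?_
      congr 1
      rw [← Real.rpow_natCast (‖x (Fin.last n)‖ ^ (2*β)) (m:ℕ), ← Real.rpow_mul (norm_nonneg _)]
    · congr 1
      refine Finset.sum_congr rfl fun m _ => ?_
      congr 1
      rw [← Real.rpow_natCast (‖x (Fin.last n)‖ ^ (2*β)) (m:ℕ), ← Real.rpow_mul (norm_nonneg _)]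
  -- key Hölder estimate for A on B₁
  have keyA : ∀ p ∈ B₁, ∀ q ∈ B₁, |A p - A q| ≤ CA * ‖p - q‖ ^ (2*β) := by
    intro p hp q hq
    set d : ℝ := ‖p - q‖ with hddef
    set δ : ℝ := d ^ (2*β) with hδdef
    have hd0 : 0 ≤ d := norm_nonneg _
    have hδ0 : 0 ≤ δ := Real.rpow_nonneg hd0 _
    have hd1 : d ≤ 1 := by
      have h1 : ‖p - q‖ ≤ ‖p‖ + ‖q‖ := norm_sub_le p q
      have h2 := mem_ball_zero_iff.1 hp
      have h3 := mem_ball_zero_iff.1 hq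
      simp only [hddef]
      linarith
    have hdδ : d ≤ δ := by
      rcases eq_or_lt_of_le hd0 with h | h
      · rw [hδdef, ← h, Real.zero_rpow (by positivity)]
      · have := Real.rpow_le_rpow_of_exponent_ge h hd1 (le_of_lt h2β1)
        rwa [Real.rpow_one] at this
    -- coordinate norms
    set xp : ℝ := ‖p (Fin.last n)‖ with hxpdef
    set xq : ℝ := ‖q (Fin.last n)‖ with hxqdef
    have hxp0 : 0 ≤ xp := norm_nonneg _
    have hxq0 : 0 ≤ xq := norm_nonneg _
    have hxp1 : xp ≤ 1 := (holder_coord_le p _).trans (hnorml p hp)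
    have hxq1 : xq ≤ 1 := (holder_coord_le q _).trans (hnorml q hq)
    have hxd : |xp - xq| ≤ d := by
      calc |xp - xq| ≤ ‖p (Fin.last n) - q (Fin.last n)‖ := abs_norm_sub_norm_le _ _
        _ = ‖(p - q) (Fin.last n)‖ := rfl
        _ ≤ ‖p - q‖ := holder_coord_le _ _
    set sp : ℝ := xp ^ (2*β) with hspdef
    set sq : ℝ := xq ^ (2*β) with hsqdef
    have hsp0 : 0 ≤ sp := Real.rpow_nonneg hxp0 _
    have hsq0 : 0 ≤ sq := Real.rpow_nonneg hxq0 _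
    have hsp1 : sp ≤ 1 := Real.rpow_le_one hxp0 hxp1 (le_of_lt h2β0)
    have hsq1 : sq ≤ 1 := Real.rpow_le_one hxq0 hxq1 (le_of_lt h2β0)
    have hsd : |sp - sq| ≤ δ := by
      calc |sp - sq| ≤ |xp - xq| ^ (2*β) :=
            holder_abs_rpow_sub hxp0 hxq0 (le_of_lt h2β0) (le_of_lt h2β1)
        _ ≤ d ^ (2*β) := Real.rpow_le_rpow (abs_nonneg _) hxd (le_of_lt h2β0)
    -- the u part
    set up : ℝ := xp ^ (2-2*β) with hupdef
    set uq : ℝ := xq ^ (2-2*β) with huqdef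
    have hup0 : 0 ≤ up := Real.rpow_nonneg hxp0 _
    have hup1 : up ≤ 1 := Real.rpow_le_one hxp0 hxp1 (by linarith)
    have hud : |up - uq| ≤ 2 * δ := by
      have h1 : |up - uq| ≤ (2-2*β) * |xp - xq| :=
        holder_abs_rpow_lip hxp0 hxp1 hxq0 hxq1 (by linarith)
      have h2 : (2-2*β) * |xp - xq| ≤ 2 * d := by
        apply mul_le_mul (by linarith) hxd (abs_nonneg _) (by norm_num)
      linarith
    -- pow differences
    have hpowgen : ∀ (M : ℝ) (m : ℕ), (m:ℝ) ≤ M → |sp ^ m - sq ^ m| ≤ M * δ := by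
      intro M m hm
      have hM0 : (0:ℝ) ≤ M := le_trans (Nat.cast_nonneg m) hm
      have h1 := holder_abs_pow_sub m hsp0 hsp1 hsq0 hsq1
      have h2 : (m:ℝ) * |sp - sq| ≤ M * δ := by
        apply mul_le_mul hm hsd (abs_nonneg _) hM0
      linarith
    have hpowle : ∀ (m : ℕ), sp ^ m ≤ 1 ∧ sq ^ m ≤ 1 ∧ (0:ℝ) ≤ sp ^ m ∧ (0:ℝ) ≤ sq ^ m :=
      fun m => ⟨pow_le_one₀ hsp0 hsp1, pow_le_one₀ hsq0 hsq1, pow_nonneg hsp0 m,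
        pow_nonneg hsq0 m⟩
    -- first sum
    have hS : |(∑ m : Fin (n+1), a m p * sp ^ (m:ℕ)) - ∑ m : Fin (n+1), a m q * sq ^ (m:ℕ)|
        ≤ (∑ m : Fin (n+1), (Na m * (n+1) + Ka m)) * δ := by
      rw [← Finset.sum_sub_distrib]
      calc |∑ m : Fin (n+1), (a m p * sp ^ (m:ℕ) - a m q * sq ^ (m:ℕ))|
          ≤ ∑ m : Fin (n+1), |a m p * sp ^ (m:ℕ) - a m q * sq ^ (m:ℕ)| :=
            Finset.abs_sum_le_sum_abs _ _
        _ ≤ ∑ m : Fin (n+1), (Na m * (n+1) + Ka m) * δ := by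
            apply Finset.sum_le_sum
            intro m _
            have e : a m p * sp ^ (m:ℕ) - a m q * sq ^ (m:ℕ)
                = a m p * (sp ^ (m:ℕ) - sq ^ (m:ℕ)) + sq ^ (m:ℕ) * (a m p - a m q) := by ring
            have h1 : |a m p * (sp ^ (m:ℕ) - sq ^ (m:ℕ))| ≤ Na m * ((n+1) * δ) := by
              rw [abs_mul]
              apply mul_le_mul (hNa p hp m) (hpowgen ((n:ℝ)+1) (m:ℕ) ?_) (abs_nonneg _) (hNa0 m)
              have := m.isLt
              push_cast
              exact_mod_cast Nat.cast_le.2 (Nat.le_of_lt_succ this) |>.trans (by norm_num)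
            have h2 : |sq ^ (m:ℕ) * (a m p - a m q)| ≤ (Ka m : ℝ) * δ := by
              rw [abs_mul]
              have h3 : |sq ^ (m:ℕ)| ≤ 1 := by
                rw [_root_.abs_of_nonneg (hpowle (m:ℕ)).2.2.2]; exact (hpowle (m:ℕ)).2.1
              have h4 : |a m p - a m q| ≤ (Ka m : ℝ) * δ := by
                have h5 := lipabs _ _ _ (hla m) p (hmema p hp m) q (hmema q hq m)
                have h6 : (Ka m : ℝ) * ‖p - q‖ ≤ (Ka m : ℝ) * δ :=
                  mul_le_mul_of_nonneg_left hdδ (Ka m).coe_nonneg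
                linarith
              calc |sq ^ (m:ℕ)| * |a m p - a m q| ≤ 1 * ((Ka m : ℝ) * δ) :=
                    mul_le_mul h3 h4 (abs_nonneg _) one_pos.le
                _ = (Ka m : ℝ) * δ := one_mul _
            calc |a m p * sp ^ (m:ℕ) - a m q * sq ^ (m:ℕ)|
                ≤ |a m p * (sp ^ (m:ℕ) - sq ^ (m:ℕ))| + |sq ^ (m:ℕ) * (a m p - a m q)| := by
                  rw [e]; exact abs_add_le _ _
              _ ≤ Na m * ((n+1) * δ) + (Ka m : ℝ) * δ := add_le_add h1 h2
              _ = (Na m * (n+1) + Ka m) * δ := by ring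
        _ = (∑ m : Fin (n+1), (Na m * (n+1) + Ka m)) * δ := by rw [Finset.sum_mul]
    -- second sum (W)
    have hW : |(∑ m : Fin (n+2), b m p * sp ^ (m:ℕ)) - ∑ m : Fin (n+2), b m q * sq ^ (m:ℕ)|
        ≤ (∑ m : Fin (n+2), (Nb m * (n+2) + Kb m)) * δ := by
      rw [← Finset.sum_sub_distrib]
      calc |∑ m : Fin (n+2), (b m p * sp ^ (m:ℕ) - b m q * sq ^ (m:ℕ))|
          ≤ ∑ m : Fin (n+2), |b m p * sp ^ (m:ℕ) - b m q * sq ^ (m:ℕ)| :=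
            Finset.abs_sum_le_sum_abs _ _
        _ ≤ ∑ m : Fin (n+2), (Nb m * (n+2) + Kb m) * δ := by
            apply Finset.sum_le_sum
            intro m _
            have e : b m p * sp ^ (m:ℕ) - b m q * sq ^ (m:ℕ)
                = b m p * (sp ^ (m:ℕ) - sq ^ (m:ℕ)) + sq ^ (m:ℕ) * (b m p - b m q) := by ring
            have h1 : |b m p * (sp ^ (m:ℕ) - sq ^ (m:ℕ))| ≤ Nb m * ((n+2) * δ) := by
              rw [abs_mul]
              apply mul_le_mul (hNb p hp m) (hpowgen ((n:ℝ)+2) (m:ℕ) ?_) (abs_nonneg _) (hNb0 m)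
              have hlt := m.isLt
              have : ((m:ℕ):ℝ) < ((n+2:ℕ):ℝ) := Nat.cast_lt.2 hlt
              push_cast at this ⊢
              linarith
            have h2 : |sq ^ (m:ℕ) * (b m p - b m q)| ≤ (Kb m : ℝ) * δ := by
              rw [abs_mul]
              have h3 : |sq ^ (m:ℕ)| ≤ 1 := by
                rw [_root_.abs_of_nonneg (hpowle (m:ℕ)).2.2.2]; exact (hpowle (m:ℕ)).2.1
              have h4 : |b m p - b m q| ≤ (Kb m : ℝ) * δ := by
                have h5 := lipabs _ _ _ (hlb m) p (hmemb p hp m) q (hmemb q hq m)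
                have h6 : (Kb m : ℝ) * ‖p - q‖ ≤ (Kb m : ℝ) * δ :=
                  mul_le_mul_of_nonneg_left hdδ (Kb m).coe_nonneg
                linarith
              calc |sq ^ (m:ℕ)| * |b m p - b m q| ≤ 1 * ((Kb m : ℝ) * δ) :=
                    mul_le_mul h3 h4 (abs_nonneg _) one_pos.le
                _ = (Kb m : ℝ) * δ := one_mul _
            calc |b m p * sp ^ (m:ℕ) - b m q * sq ^ (m:ℕ)|
                ≤ |b m p * (sp ^ (m:ℕ) - sq ^ (m:ℕ))| + |sq ^ (m:ℕ) * (b m p - b m q)| := by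
                  rw [e]; exact abs_add_le _ _
              _ ≤ Nb m * ((n+2) * δ) + (Kb m : ℝ) * δ := add_le_add h1 h2
              _ = (Nb m * (n+2) + Kb m) * δ := by ring
        _ = (∑ m : Fin (n+2), (Nb m * (n+2) + Kb m)) * δ := by rw [Finset.sum_mul]
    have hWq : |∑ m : Fin (n+2), b m q * sq ^ (m:ℕ)| ≤ ∑ m : Fin (n+2), Nb m := by
      calc |∑ m : Fin (n+2), b m q * sq ^ (m:ℕ)| ≤ ∑ m : Fin (n+2), |b m q * sq ^ (m:ℕ)| :=
            Finset.abs_sum_le_sum_abs _ _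
        _ ≤ ∑ m : Fin (n+2), Nb m := by
            apply Finset.sum_le_sum
            intro m _
            rw [abs_mul]
            calc |b m q| * |sq ^ (m:ℕ)| ≤ Nb m * 1 := by
                  apply mul_le_mul (hNb q hq m) ?_ (abs_nonneg _) (hNb0 m)
                  rw [_root_.abs_of_nonneg (hpowle (m:ℕ)).2.2.2]; exact (hpowle (m:ℕ)).2.1
              _ = Nb m := mul_one _
    -- combine
    rw [hArw p, hArw q]
    have e2 : up * (∑ m : Fin (n+2), b m p * sp ^ (m:ℕ))
        - uq * (∑ m : Fin (n+2), b m q * sq ^ (m:ℕ))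
        = up * ((∑ m : Fin (n+2), b m p * sp ^ (m:ℕ))
            - ∑ m : Fin (n+2), b m q * sq ^ (m:ℕ))
          + (∑ m : Fin (n+2), b m q * sq ^ (m:ℕ)) * (up - uq) := by ring
    have hupart : |up * (∑ m : Fin (n+2), b m p * sp ^ (m:ℕ))
        - uq * (∑ m : Fin (n+2), b m q * sq ^ (m:ℕ))|
        ≤ ((∑ m : Fin (n+2), (Nb m * (n+2) + Kb m)) + 2 * ∑ m : Fin (n+2), Nb m) * δ := by
      rw [e2]
      have h1 : |up * ((∑ m : Fin (n+2), b m p * sp ^ (m:ℕ))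
          - ∑ m : Fin (n+2), b m q * sq ^ (m:ℕ))|
          ≤ (∑ m : Fin (n+2), (Nb m * (n+2) + Kb m)) * δ := by
        rw [abs_mul]
        calc |up| * |(∑ m : Fin (n+2), b m p * sp ^ (m:ℕ))
              - ∑ m : Fin (n+2), b m q * sq ^ (m:ℕ)|
            ≤ 1 * ((∑ m : Fin (n+2), (Nb m * (n+2) + Kb m)) * δ) := by
              apply mul_le_mul ?_ hW (abs_nonneg _) one_pos.le
              rwa [_root_.abs_of_nonneg hup0]
          _ = (∑ m : Fin (n+2), (Nb m * (n+2) + Kb m)) * δ := one_mul _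
      have h2 : |(∑ m : Fin (n+2), b m q * sq ^ (m:ℕ)) * (up - uq)|
          ≤ (∑ m : Fin (n+2), Nb m) * (2 * δ) := by
        rw [abs_mul]
        apply mul_le_mul hWq hud (abs_nonneg _)
          (Finset.sum_nonneg fun m _ => hNb0 m)
      calc |up * ((∑ m : Fin (n+2), b m p * sp ^ (m:ℕ))
            - ∑ m : Fin (n+2), b m q * sq ^ (m:ℕ))
          + (∑ m : Fin (n+2), b m q * sq ^ (m:ℕ)) * (up - uq)|
          ≤ |up * ((∑ m : Fin (n+2), b m p * sp ^ (m:ℕ))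
            - ∑ m : Fin (n+2), b m q * sq ^ (m:ℕ))|
            + |(∑ m : Fin (n+2), b m q * sq ^ (m:ℕ)) * (up - uq)| := abs_add_le _ _
        _ ≤ (∑ m : Fin (n+2), (Nb m * (n+2) + Kb m)) * δ
            + (∑ m : Fin (n+2), Nb m) * (2 * δ) := add_le_add h1 h2
        _ = ((∑ m : Fin (n+2), (Nb m * (n+2) + Kb m)) + 2 * ∑ m : Fin (n+2), Nb m) * δ := by
            ring
    calc |((∑ m : Fin (n+1), a m p * sp ^ (m:ℕ)) + up * ∑ m : Fin (n+2), b m p * sp ^ (m:ℕ))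
        - ((∑ m : Fin (n+1), a m q * sq ^ (m:ℕ)) + uq * ∑ m : Fin (n+2), b m q * sq ^ (m:ℕ))|
        ≤ |(∑ m : Fin (n+1), a m p * sp ^ (m:ℕ)) - ∑ m : Fin (n+1), a m q * sq ^ (m:ℕ)|
          + |up * (∑ m : Fin (n+2), b m p * sp ^ (m:ℕ))
            - uq * (∑ m : Fin (n+2), b m q * sq ^ (m:ℕ))| := by
          have e3 : ((∑ m : Fin (n+1), a m p * sp ^ (m:ℕ))
              + up * ∑ m : Fin (n+2), b m p * sp ^ (m:ℕ))
              - ((∑ m : Fin (n+1), a m q * sq ^ (m:ℕ))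
              + uq * ∑ m : Fin (n+2), b m q * sq ^ (m:ℕ))
              = ((∑ m : Fin (n+1), a m p * sp ^ (m:ℕ))
                - ∑ m : Fin (n+1), a m q * sq ^ (m:ℕ))
                + (up * (∑ m : Fin (n+2), b m p * sp ^ (m:ℕ))
                - uq * (∑ m : Fin (n+2), b m q * sq ^ (m:ℕ))) := by ring
          rw [e3]; exact abs_add_le _ _
      _ ≤ (∑ m : Fin (n+1), (Na m * (n+1) + Ka m)) * δ
          + ((∑ m : Fin (n+2), (Nb m * (n+2) + Kb m)) + 2 * ∑ m : Fin (n+2), Nb m) * δ :=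
          add_le_add hS hupart
      _ = CA * δ := by rw [hCAdef]; ring
  -- choose the final radius
  set α0 : ℝ := a 0 0 with hα0def
  have hα0 : 0 < α0 := ha0 0 h0U
  set ρ0 : ℝ := ρ 0 with hρ0def
  have hρ0 : 0 < ρ0 := hρpos 0 h0U
  have hX0 : 0 < α0/(2*(CA+1)) := by positivity
  set r : ℝ := min (r₁/2) (min ((α0/(2*(CA+1))) ^ (2*β)⁻¹) (ρ0/(2*((Kρ:ℝ)+1)))) with hrdef
  have hr0 : 0 < r := by
    apply lt_min (by linarith)
    apply lt_min
    · exact Real.rpow_pos_of_pos hX0 _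
    · positivity
  have hrr₁ : Metric.ball (0 : EuclideanSpace ℂ (Fin (n+1))) r ⊆ B₁ :=
    Metric.ball_subset_ball (le_trans (min_le_left _ _) (by linarith))
  have hrU : Metric.ball (0 : EuclideanSpace ℂ (Fin (n+1))) r ⊆ U := hrr₁.trans hB₁U
  have hA0 : A 0 = α0 := hAzero 0 rfl
  have hrpow : r ^ (2*β) ≤ α0/(2*(CA+1)) := by
    have h1 : r ≤ (α0/(2*(CA+1))) ^ (2*β)⁻¹ := le_trans (min_le_right _ _) (min_le_left _ _)
    have h2 : r ^ (2*β) ≤ ((α0/(2*(CA+1))) ^ (2*β)⁻¹) ^ (2*β) :=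
      Real.rpow_le_rpow hr0.le h1 h2β0.le
    rwa [Real.rpow_inv_rpow hX0.le (by positivity)] at h2
  have hAlow : ∀ p ∈ Metric.ball (0 : EuclideanSpace ℂ (Fin (n+1))) r, α0/2 ≤ A p := by
    intro p hp
    have hpB₁ : p ∈ B₁ := hrr₁ hp
    have h1 := keyA p hpB₁ 0 h0B₁
    rw [hA0] at h1
    have h2 : ‖p - 0‖ ^ (2*β) ≤ r ^ (2*β) := by
      apply Real.rpow_le_rpow (norm_nonneg _) ?_ h2β0.le
      rw [sub_zero]
      exact (mem_ball_zero_iff.1 hp).le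
    have h3 : CA * ‖p - 0‖ ^ (2*β) ≤ CA * (α0/(2*(CA+1))) :=
      mul_le_mul_of_nonneg_left (h2.trans hrpow) hCA0
    have h4 : CA * (α0/(2*(CA+1))) ≤ α0/2 := by
      rw [← mul_div_assoc, div_le_div_iff₀ (by positivity) two_pos]
      nlinarith
    have h5 := abs_le.1 (h1.trans (h3.trans h4))
    linarith [h5.1]
  have hρlow : ∀ p ∈ Metric.ball (0 : EuclideanSpace ℂ (Fin (n+1))) r, ρ0/2 ≤ ρ p := by
    intro p hp
    have hpB₁ : p ∈ B₁ := hrr₁ hp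
    have h1 := lipabs _ _ _ hlρ p (hmemρ p hpB₁) 0 (hmemρ 0 h0B₁)
    have h2 : ‖p - 0‖ ≤ r := by rw [sub_zero]; exact (mem_ball_zero_iff.1 hp).le
    have h3 : r ≤ ρ0/(2*((Kρ:ℝ)+1)) := le_trans (min_le_right _ _) (min_le_right _ _)
    have h4 : (Kρ:ℝ) * ‖p - 0‖ ≤ ρ0/2 := by
      calc (Kρ:ℝ) * ‖p - 0‖ ≤ (Kρ:ℝ) * (ρ0/(2*((Kρ:ℝ)+1))) :=
            mul_le_mul_of_nonneg_left (h2.trans h3) Kρ.coe_nonneg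
        _ ≤ ρ0/2 := by
            rw [← mul_div_assoc, div_le_div_iff₀ (by positivity) two_pos]
            nlinarith [Kρ.coe_nonneg]
    have h5 := abs_le.1 (h1.trans h4)
    linarith [h5.1]
  have hFG : ∀ p ∈ Metric.ball (0 : EuclideanSpace ℂ (Fin (n+1))) r,
      F p = F₀ p - (1/β - 1) * Real.log (ρ p) - Real.log (A p) := by
    intro p hp
    by_cases hz : p (Fin.last n) = 0
    · rw [hFext p (hrU hp) hz, hAzero p hz]
    · exact hF p (hrU hp) hz
  set C : ℝ := (KF:ℝ) + |1/β - 1| * Kρ * (2/ρ0) + CA * (2/α0) + 1 with hCdef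
  have hCpos : 0 < C := by
    have h1 : (0:ℝ) ≤ KF := KF.coe_nonneg
    have h2 : (0:ℝ) ≤ |1/β - 1| * Kρ * (2/ρ0) :=
      mul_nonneg (mul_nonneg (abs_nonneg _) Kρ.coe_nonneg) (div_nonneg (by norm_num) hρ0.le)
    have h3 : (0:ℝ) ≤ CA * (2/α0) := mul_nonneg hCA0 (div_nonneg (by norm_num) hα0.le)
    rw [hCdef]; linarith
  refine ⟨r, hr0, C, hCpos, hrU, fun p hp => lt_of_lt_of_le (by positivity) (hAlow p hp), ?_⟩
  intro p hp q hq
  have hpB₁ : p ∈ B₁ := hrr₁ hp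
  have hqB₁ : q ∈ B₁ := hrr₁ hq
  set d : ℝ := ‖p - q‖ with hddef
  set δ : ℝ := d ^ (2*β) with hδdef
  have hd0 : 0 ≤ d := norm_nonneg _
  have hδ0 : 0 ≤ δ := Real.rpow_nonneg hd0 _
  have hd1 : d ≤ 1 := by
    have h1 : ‖p - q‖ ≤ ‖p‖ + ‖q‖ := norm_sub_le p q
    have h2 := (mem_ball_zero_iff.1 (hrr₁ hp))
    have h3 := (mem_ball_zero_iff.1 (hrr₁ hq))
    simp only [hddef]
    linarith
  have hdδ : d ≤ δ := by
    rcases eq_or_lt_of_le hd0 with h | h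
    · rw [hδdef, ← h, Real.zero_rpow (by positivity)]
    · have := Real.rpow_le_rpow_of_exponent_ge h hd1 (le_of_lt h2β1)
      rwa [Real.rpow_one] at this
  -- three pieces
  have hF₀d : |F₀ p - F₀ q| ≤ (KF:ℝ) * δ := by
    have h1 := lipabs _ _ _ hlF p (hmemF p hpB₁) q (hmemF q hqB₁)
    have h2 : (KF:ℝ) * ‖p - q‖ ≤ (KF:ℝ) * δ := mul_le_mul_of_nonneg_left hdδ KF.coe_nonneg
    linarith
  have hρd : |Real.log (ρ p) - Real.log (ρ q)| ≤ (Kρ:ℝ) * (2/ρ0) * δ := by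
    have l1 := holder_abs_log_sub (by positivity : (0:ℝ) < ρ0/2) (hρlow p hp) (hρlow q hq)
    have l2 := lipabs _ _ _ hlρ p (hmemρ p hpB₁) q (hmemρ q hqB₁)
    have l3 : |ρ p - ρ q| ≤ (Kρ:ℝ) * δ := by
      have := mul_le_mul_of_nonneg_left hdδ Kρ.coe_nonneg
      linarith
    have l4 : |ρ p - ρ q| / (ρ0/2) ≤ ((Kρ:ℝ) * δ) / (ρ0/2) := by gcongr
    have l5 : ((Kρ:ℝ) * δ) / (ρ0/2) = (Kρ:ℝ) * (2/ρ0) * δ := by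
      field_simp
    linarith
  have hAd : |Real.log (A p) - Real.log (A q)| ≤ CA * (2/α0) * δ := by
    have l1 := holder_abs_log_sub (by positivity : (0:ℝ) < α0/2) (hAlow p hp) (hAlow q hq)
    have l2 := keyA p hpB₁ q hqB₁
    have l4 : |A p - A q| / (α0/2) ≤ (CA * δ) / (α0/2) := by gcongr
    have l5 : (CA * δ) / (α0/2) = CA * (2/α0) * δ := by
      field_simp
    linarith
  rw [hFG p hp, hFG q hq]
  have e : (F₀ p - (1/β - 1) * Real.log (ρ p) - Real.log (A p))
      - (F₀ q - (1/β - 1) * Real.log (ρ q) - Real.log (A q))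
      = (F₀ p - F₀ q) + (-((1/β - 1) * (Real.log (ρ p) - Real.log (ρ q))))
        + (-(Real.log (A p) - Real.log (A q))) := by ring
  calc |(F₀ p - (1/β - 1) * Real.log (ρ p) - Real.log (A p))
      - (F₀ q - (1/β - 1) * Real.log (ρ q) - Real.log (A q))|
      ≤ |F₀ p - F₀ q| + |(1/β - 1) * (Real.log (ρ p) - Real.log (ρ q))|
        + |Real.log (A p) - Real.log (A q)| := by
        rw [e]
        calc |(F₀ p - F₀ q) + (-((1/β - 1) * (Real.log (ρ p) - Real.log (ρ q))))
            + (-(Real.log (A p) - Real.log (A q)))|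
            ≤ |F₀ p - F₀ q| + |(-((1/β - 1) * (Real.log (ρ p) - Real.log (ρ q))))|
              + |(-(Real.log (A p) - Real.log (A q)))| := abs_add_three _ _ _
          _ = |F₀ p - F₀ q| + |(1/β - 1) * (Real.log (ρ p) - Real.log (ρ q))|
              + |Real.log (A p) - Real.log (A q)| := by rw [abs_neg, abs_neg]
    _ ≤ (KF:ℝ) * δ + |1/β - 1| * ((Kρ:ℝ) * (2/ρ0) * δ) + CA * (2/α0) * δ := by
        have h1 : |(1/β - 1) * (Real.log (ρ p) - Real.log (ρ q))|
            ≤ |1/β - 1| * ((Kρ:ℝ) * (2/ρ0) * δ) := by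
          rw [abs_mul]
          exact mul_le_mul_of_nonneg_left hρd (abs_nonneg _)
        linarith
    _ ≤ C * δ := by
        rw [hCdef]
        nlinarith [hδ0]
end
end

section
/- For every integer n ≥ 2 and all positive real numbers λ₁,…,λ_n: Σ_{μ=1}^{n} 1/λ_μ ≥ ( (Σ_{μ=1}^{n} λ_μ) / (∏_{μ=1}^{n} λ_μ) )^{1/(n−1)}. -/
/-!
STATEMENT 13: the symmetric-function inequality
Σ 1/λ_μ ≥ ( (Σ λ_μ) / (∏ λ_μ) )^{1/(n−1)} for positive reals λ₁,…,λ_n, n ≥ 2.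
-/

open Finset

theorem symmetric_function_inequality
    (n : ℕ) (hn : 2 ≤ n) (lam : Fin n → ℝ) (hlam : ∀ μ, 0 < lam μ) :
    ((∑ μ : Fin n, lam μ) / (∏ μ : Fin n, lam μ)) ^ ((1:ℝ) / ((n:ℝ) - 1))
      ≤ ∑ μ : Fin n, 1 / lam μ := by
  have hnpos : 0 < n := by omega
  haveI : NeZero n := ⟨by omega⟩
  set m : Fin n → ℝ := fun i => 1 / lam i with hm
  have hmpos : ∀ i, 0 < m i := fun i => one_div_pos.mpr (hlam i)
  set T : ℝ := ∑ μ : Fin n, m μ with hT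
  have hTpos : 0 < T := Finset.sum_pos (fun i _ => hmpos i) univ_nonempty
  have hmT : ∀ ν, m ν ≤ T := fun ν =>
    Finset.single_le_sum (fun i _ => (hmpos i).le) (mem_univ ν)
  -- Step 1: rewrite S/P as sum of products over erased sets
  have hSP : (∑ μ : Fin n, lam μ) / (∏ μ : Fin n, lam μ)
      = ∑ μ : Fin n, ∏ ν ∈ univ.erase μ, m ν := by
    rw [Finset.sum_div]
    refine Finset.sum_congr rfl fun μ _ => ?_
    rw [← Finset.mul_prod_erase univ lam (mem_univ μ)]
    have h1 : lam μ ≠ 0 := (hlam μ).ne'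
    have h2 : (∏ ν ∈ univ.erase μ, lam ν) ≠ 0 :=
      Finset.prod_ne_zero_iff.2 fun i _ => (hlam i).ne'
    have h3 : ∏ ν ∈ univ.erase μ, m ν = (∏ ν ∈ univ.erase μ, lam ν)⁻¹ := by
      rw [← Finset.prod_inv_distrib]
      exact Finset.prod_congr rfl fun i _ => one_div _
    rw [h3]
    field_simp
  -- Step 2: bound each term
  have hterm : ∀ μ : Fin n, ∏ ν ∈ univ.erase μ, m ν ≤ m (μ + 1) * T ^ (n - 2) := by
    intro μ
    have hne : μ + 1 ≠ μ := by
      intro h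
      have h0 : (1 : Fin n) = 0 := add_left_cancel (h.trans (add_zero μ).symm)
      have h1 : ((1 : Fin n) : ℕ) = ((0 : Fin n) : ℕ) := congrArg Fin.val h0
      rw [Fin.val_one'] at h1; simp at h1
      omega
    have hmem : μ + 1 ∈ univ.erase μ := Finset.mem_erase.2 ⟨hne, mem_univ _⟩
    rw [← Finset.mul_prod_erase _ m hmem]
    have hcard : ((univ.erase μ).erase (μ + 1)).card = n - 2 := by
      rw [Finset.card_erase_of_mem hmem, Finset.card_erase_of_mem (mem_univ μ),
        Finset.card_univ, Fintype.card_fin]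
      omega
    have hbound : ∏ ν ∈ (univ.erase μ).erase (μ + 1), m ν ≤ T ^ (n - 2) := by
      calc ∏ ν ∈ (univ.erase μ).erase (μ + 1), m ν
          ≤ ∏ _ν ∈ (univ.erase μ).erase (μ + 1), T :=
            Finset.prod_le_prod (fun i _ => (hmpos i).le) (fun i _ => hmT i)
        _ = T ^ (n - 2) := by rw [Finset.prod_const, hcard]
    exact mul_le_mul_of_nonneg_left hbound (hmpos _).le
  -- Step 3: sum the bounds
  have hsum : ∑ μ : Fin n, m (μ + 1) * T ^ (n - 2) = T ^ (n - 1) := by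
    rw [← Finset.sum_mul]
    have h4 : ∑ μ : Fin n, m (μ + 1) = T := by
      rw [hT]
      exact Fintype.sum_equiv (Equiv.addRight 1) _ _ (fun μ => rfl)
    rw [h4, ← pow_succ']
    congr 1
    omega
  have hmain : (∑ μ : Fin n, lam μ) / (∏ μ : Fin n, lam μ) ≤ T ^ (n - 1) := by
    rw [hSP, ← hsum]
    exact Finset.sum_le_sum fun μ _ => hterm μ
  -- Step 4: take rpow
  have hSPpos : 0 < (∑ μ : Fin n, lam μ) / (∏ μ : Fin n, lam μ) := by
    apply div_pos (Finset.sum_pos (fun i _ => hlam i) univ_nonempty)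
    exact Finset.prod_pos fun i _ => hlam i
  have hc : ((n - 1 : ℕ) : ℝ) = (n : ℝ) - 1 := by
    push_cast [Nat.cast_sub (by omega : 1 ≤ n)]; ring
  have hcne : (n : ℝ) - 1 ≠ 0 := by
    have : (2 : ℝ) ≤ n := by exact_mod_cast hn
    linarith
  calc ((∑ μ : Fin n, lam μ) / (∏ μ : Fin n, lam μ)) ^ ((1:ℝ) / ((n:ℝ) - 1))
      ≤ (T ^ (n - 1)) ^ ((1:ℝ) / ((n:ℝ) - 1)) := by
        apply Real.rpow_le_rpow hSPpos.le hmain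
        have h2 : (2:ℝ) ≤ (n:ℝ) := by exact_mod_cast hn
        apply div_nonneg one_pos.le
        linarith
    _ = T := by
        rw [← Real.rpow_natCast T (n - 1), ← Real.rpow_mul hTpos.le, hc,
          mul_one_div_cancel hcne, Real.rpow_one]
end

section
/- Fix α ∈ (0,1) and β ∈ (0,1/2). Let f̃: B₁(0) ⊆ ℂ → ℂ be α-Hölder continuous, and define h(ζ) = |ζ|^{2β−2}·( f̃(|ζ|^{β−1}ζ) − f̃(0) ) for ζ ∈ B₁(0)∖{0}. Then there exists C > 0 (depending only on α, β and the α-Hölder seminorm of f̃) such that: (i) |h(ζ)| ≤ C·|ζ|^{2β−2+αβ} for all 0 < |ζ| < 1; and (ii) for every ζ₀ ∈ B_{1/4}(0)∖{0} and all ζ₁, ζ₂ ∈ B_{|ζ₀|/2}(ζ₀): |h(ζ₁) − h(ζ₂)| ≤ C·|ζ₀|^{2β−2+α(β−1)}·|ζ₁ − ζ₂|^α. -/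
/-!
STATEMENT 15: estimates for h(ζ) = |ζ|^{2β−2}( f̃(|ζ|^{β−1}ζ) − f̃(0) ) when f̃ is
α-Hölder continuous on the unit disk: |h(ζ)| ≤ C|ζ|^{2β−2+αβ}, and the local Hölder
seminorm bound [h]_{C^α(B_{|ζ₀|/2}(ζ₀))} ≤ C|ζ₀|^{2β−2+α(β−1)}, with C depending only
on α, β and the Hölder seminorm bound Cf of f̃.
-/

noncomputable section

open Complex Metric

/-- Mean value estimate for negative powers. -/
lemma rpow_lip_aux {p m : ℝ} (hp : p < 0) (hm : 0 < m) {a b : ℝ} (ha : m ≤ a) (hb : m ≤ b) :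
    |a ^ p - b ^ p| ≤ (-p) * m ^ (p - 1) * |a - b| := by
  have key : ∀ x ∈ Set.Ici m, HasDerivWithinAt (fun t : ℝ => t ^ p) (p * x ^ (p - 1))
      (Set.Ici m) x := by
    intro x hx
    exact (Real.hasDerivAt_rpow_const (Or.inl (by
      have : 0 < x := lt_of_lt_of_le hm hx; positivity))).hasDerivWithinAt
  have bound : ∀ x ∈ Set.Ici m, ‖p * x ^ (p - 1)‖ ≤ (-p) * m ^ (p - 1) := by
    intro x hx
    have hx0 : 0 < x := lt_of_lt_of_le hm hx
    rw [Real.norm_eq_abs, abs_mul, abs_of_neg hp, _root_.abs_of_nonneg (Real.rpow_nonneg hx0.le _)]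
    exact mul_le_mul_of_nonneg_left (Real.rpow_le_rpow_of_nonpos hm hx (by linarith))
      (by linarith)
  have := (convex_Ici m).norm_image_sub_le_of_norm_hasDerivWithin_le key bound hb ha
  simpa [Real.norm_eq_abs] using this

lemma two_rpow_le_aux {x : ℝ} {n : ℕ} (h : x ≤ n) : (2:ℝ) ^ x ≤ 2 ^ n := by
  calc (2:ℝ) ^ x ≤ (2:ℝ) ^ (n:ℝ) := Real.rpow_le_rpow_of_exponent_le one_le_two h
  _ = 2 ^ n := Real.rpow_natCast 2 n

lemma half_rpow_aux {r : ℝ} (hr : 0 < r) (p : ℝ) : (r / 2) ^ p = 2 ^ (-p) * r ^ p := by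
  rw [Real.div_rpow hr.le (by norm_num), Real.rpow_neg (by norm_num)]
  field_simp

theorem h_estimates
    (α β : ℝ) (hα : α ∈ Set.Ioo (0:ℝ) 1) (hβ : β ∈ Set.Ioo (0:ℝ) (1/2))
    (Cf : ℝ) :
    ∃ C > (0:ℝ), ∀ ft : ℂ → ℂ,
      (∀ x ∈ Metric.ball (0:ℂ) 1, ∀ y ∈ Metric.ball (0:ℂ) 1,
        ‖ft x - ft y‖ ≤ Cf * ‖x - y‖ ^ α) →
      -- (i)
      ((∀ ζ : ℂ, 0 < ‖ζ‖ → ‖ζ‖ < 1 →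
        ‖(‖ζ‖ ^ (2*β - 2) : ℝ) •
            (ft (((‖ζ‖ ^ (β - 1) : ℝ) : ℂ) * ζ) - ft 0)‖
          ≤ C * ‖ζ‖ ^ (2*β - 2 + α*β)) ∧
      -- (ii)
      (∀ ζ₀ ∈ Metric.ball (0:ℂ) (1/4), ζ₀ ≠ (0:ℂ) →
        ∀ ζ₁ ∈ Metric.ball ζ₀ (‖ζ₀‖/2), ∀ ζ₂ ∈ Metric.ball ζ₀ (‖ζ₀‖/2),
          ‖(‖ζ₁‖ ^ (2*β - 2) : ℝ) •
              (ft (((‖ζ₁‖ ^ (β - 1) : ℝ) : ℂ) * ζ₁) - ft 0)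
            - (‖ζ₂‖ ^ (2*β - 2) : ℝ) •
              (ft (((‖ζ₂‖ ^ (β - 1) : ℝ) : ℂ) * ζ₂) - ft 0)‖
          ≤ C * ‖ζ₀‖ ^ (2*β - 2 + α*(β - 1)) * ‖ζ₁ - ζ₂‖ ^ α)) := by
  obtain ⟨hα0, hα1⟩ := hα
  obtain ⟨hβ0, hβ1⟩ := hβ
  set M : ℝ := max Cf 0 with hMdef
  have hM0 : 0 ≤ M := le_max_right _ _
  refine ⟨64 * (M + 1), by positivity, ?_⟩
  intro ft hf
  have hM : ∀ x ∈ Metric.ball (0:ℂ) 1, ∀ y ∈ Metric.ball (0:ℂ) 1,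
      ‖ft x - ft y‖ ≤ M * ‖x - y‖ ^ α := by
    intro x hx y hy
    exact (hf x hx y hy).trans (mul_le_mul_of_nonneg_right (le_max_left _ _)
      (Real.rpow_nonneg (norm_nonneg _) _))
  have h0ball : (0:ℂ) ∈ Metric.ball (0:ℂ) 1 := by simp
  constructor
  · -- Part (i)
    intro ζ h0 h1
    set r := ‖ζ‖ with hrdef
    have hgnorm : ‖((r ^ (β - 1) : ℝ) : ℂ) * ζ‖ = r ^ β := by
      rw [norm_mul, Complex.norm_real, Real.norm_eq_abs,
        _root_.abs_of_nonneg (Real.rpow_nonneg (norm_nonneg _) _), ← hrdef,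
        ← Real.rpow_add_one (ne_of_gt h0)]
      ring_nf
    have hgball : ((r ^ (β - 1) : ℝ) : ℂ) * ζ ∈ Metric.ball (0:ℂ) 1 := by
      rw [Metric.mem_ball, dist_zero_right, hgnorm]
      exact Real.rpow_lt_one h0.le h1 hβ0
    have hft := hM _ hgball _ h0ball
    rw [sub_zero, hgnorm] at hft
    have hpow : (r ^ β) ^ α = r ^ (β * α) := (Real.rpow_mul h0.le β α).symm
    calc ‖(r ^ (2*β - 2) : ℝ) • (ft (((r ^ (β - 1) : ℝ) : ℂ) * ζ) - ft 0)‖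
        = r ^ (2*β - 2) * ‖ft (((r ^ (β - 1) : ℝ) : ℂ) * ζ) - ft 0‖ := by
          rw [norm_smul, Real.norm_eq_abs, _root_.abs_of_nonneg (Real.rpow_nonneg (norm_nonneg _) _)]
      _ ≤ r ^ (2*β - 2) * (M * (r ^ β) ^ α) := by
          exact mul_le_mul_of_nonneg_left hft (Real.rpow_nonneg (norm_nonneg _) _)
      _ = M * (r ^ (2*β - 2) * r ^ (β * α)) := by rw [hpow]; ring
      _ = M * r ^ (2*β - 2 + α*β) := by
          rw [← Real.rpow_add h0]; ring_nf
      _ ≤ 64 * (M + 1) * r ^ (2*β - 2 + α*β) := by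
          have := Real.rpow_nonneg (norm_nonneg ζ) (2*β - 2 + α*β)
          nlinarith
  · -- Part (ii)
    intro ζ₀ hζ₀b hζ₀ne ζ₁ hζ₁ ζ₂ hζ₂
    set r := ‖ζ₀‖ with hrdef
    have hr : 0 < r := norm_pos_iff.mpr hζ₀ne
    have hr4 : r < 1/4 := by rwa [Metric.mem_ball, dist_zero_right] at hζ₀b
    have pack : ∀ ζ ∈ Metric.ball ζ₀ (r/2), r/2 ≤ ‖ζ‖ ∧ ‖ζ‖ ≤ 3*r/2 := by
      intro ζ hζ
      rw [Metric.mem_ball, dist_eq_norm] at hζ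
      constructor
      · have := norm_sub_norm_le ζ₀ ζ
        rw [norm_sub_rev] at this
        linarith
      · have : ‖ζ‖ ≤ ‖ζ - ζ₀‖ + ‖ζ₀‖ := by
          calc ‖ζ‖ = ‖(ζ - ζ₀) + ζ₀‖ := by ring_nf
            _ ≤ ‖ζ - ζ₀‖ + ‖ζ₀‖ := norm_add_le _ _
        linarith
    obtain ⟨h1lo, h1hi⟩ := pack ζ₁ hζ₁
    obtain ⟨h2lo, h2hi⟩ := pack ζ₂ hζ₂
    have hr2 : 0 < r/2 := by linarith
    have h1pos : 0 < ‖ζ₁‖ := lt_of_lt_of_le hr2 h1lo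
    have h2pos : 0 < ‖ζ₂‖ := lt_of_lt_of_le hr2 h2lo
    have h1lt1 : ‖ζ₁‖ < 1 := by linarith
    have h2lt1 : ‖ζ₂‖ < 1 := by linarith
    set r₁ := ‖ζ₁‖
    set r₂ := ‖ζ₂‖
    set g₁ : ℂ := ((r₁ ^ (β - 1) : ℝ) : ℂ) * ζ₁ with hg₁def
    set g₂ : ℂ := ((r₂ ^ (β - 1) : ℝ) : ℂ) * ζ₂ with hg₂def
    have hgnorm : ∀ (ζ : ℂ), 0 < ‖ζ‖ → ‖((‖ζ‖ ^ (β - 1) : ℝ) : ℂ) * ζ‖ = ‖ζ‖ ^ β := by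
      intro ζ h0
      rw [norm_mul, Complex.norm_real, Real.norm_eq_abs,
        _root_.abs_of_nonneg (Real.rpow_nonneg (norm_nonneg _) _),
        ← Real.rpow_add_one (ne_of_gt h0)]
      ring_nf
    have hg₁n : ‖g₁‖ = r₁ ^ β := hgnorm ζ₁ h1pos
    have hg₂n : ‖g₂‖ = r₂ ^ β := hgnorm ζ₂ h2pos
    have hg₁b : g₁ ∈ Metric.ball (0:ℂ) 1 := by
      rw [Metric.mem_ball, dist_zero_right, hg₁n]
      exact Real.rpow_lt_one h1pos.le h1lt1 hβ0
    have hg₂b : g₂ ∈ Metric.ball (0:ℂ) 1 := by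
      rw [Metric.mem_ball, dist_zero_right, hg₂n]
      exact Real.rpow_lt_one h2pos.le h2lt1 hβ0
    set Δ := ζ₁ - ζ₂ with hΔdef
    -- trivial case
    rcases eq_or_ne ζ₁ ζ₂ with heq | hne
    · subst heq
      simp only [r₁, r₂, g₁, g₂, Δ, sub_self, norm_zero]
      positivity
    have hΔpos : 0 < ‖Δ‖ := by
      rw [hΔdef, norm_pos_iff]
      exact sub_ne_zero_of_ne hne
    have hΔler : ‖Δ‖ ≤ r := by
      rw [Metric.mem_ball, dist_eq_norm] at hζ₁ hζ₂
      calc ‖Δ‖ = ‖(ζ₁ - ζ₀) - (ζ₂ - ζ₀)‖ := by rw [hΔdef]; ring_nf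
        _ ≤ ‖ζ₁ - ζ₀‖ + ‖ζ₂ - ζ₀‖ := norm_sub_le _ _
        _ ≤ r := by linarith
    have habs : |r₁ - r₂| ≤ ‖Δ‖ := abs_norm_sub_norm_le ζ₁ ζ₂
    -- bound on the difference of the rescaling maps
    have hrpow_nonneg : ∀ p : ℝ, 0 ≤ r ^ p := fun p => Real.rpow_nonneg hr.le p
    have e1 : r₁ ^ (β - 1) ≤ 2 * r ^ (β - 1) := by
      calc r₁ ^ (β - 1) ≤ (r/2) ^ (β - 1) :=
            Real.rpow_le_rpow_of_nonpos hr2 h1lo (by linarith)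
        _ = 2 ^ (-(β - 1)) * r ^ (β - 1) := half_rpow_aux hr _
        _ ≤ 2 * r ^ (β - 1) := by
            have h2b : (2:ℝ) ^ (-(β - 1)) ≤ 2 ^ (1:ℕ) :=
              two_rpow_le_aux (by push_cast; linarith)
            have := mul_le_mul_of_nonneg_right h2b (hrpow_nonneg (β - 1))
            simpa using this
    have e2 : |r₁ ^ (β - 1) - r₂ ^ (β - 1)| ≤ 4 * r ^ (β - 2) * ‖Δ‖ := by
      have hmvt := rpow_lip_aux (p := β - 1) (by linarith) hr2 h1lo h2lo
      have hhalf : (r/2) ^ (β - 1 - 1) ≤ 4 * r ^ (β - 2) := by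
        rw [half_rpow_aux hr, show β - 1 - 1 = β - 2 from by ring]
        have h2b : (2:ℝ) ^ (-(β - 2)) ≤ 2 ^ (2:ℕ) :=
          two_rpow_le_aux (by push_cast; linarith)
        have := mul_le_mul_of_nonneg_right h2b (hrpow_nonneg (β - 2))
        simpa [show ((2:ℝ)^(2:ℕ) : ℝ) = 4 from by norm_num] using this
      calc |r₁ ^ (β - 1) - r₂ ^ (β - 1)|
          ≤ (-(β - 1)) * (r/2) ^ (β - 1 - 1) * |r₁ - r₂| := hmvt
        _ ≤ 1 * (4 * r ^ (β - 2)) * ‖Δ‖ := by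
            have hhp : (0:ℝ) ≤ (r/2) ^ (β - 1 - 1) := Real.rpow_nonneg hr2.le _
            gcongr <;> linarith
        _ = 4 * r ^ (β - 2) * ‖Δ‖ := by ring
    have hrr : r ^ (β - 2) * r = r ^ (β - 1) := by
      rw [← Real.rpow_add_one hr.ne']; congr 1; ring
    have hg12 : ‖g₁ - g₂‖ ≤ 8 * r ^ (β - 1) * ‖Δ‖ := by
      have hsplit : g₁ - g₂ = ((r₁ ^ (β - 1) : ℝ) : ℂ) * Δ
          + (((r₁ ^ (β - 1) - r₂ ^ (β - 1) : ℝ)) : ℂ) * ζ₂ := by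
        rw [hg₁def, hg₂def, hΔdef]; push_cast; ring
      calc ‖g₁ - g₂‖
          ≤ ‖((r₁ ^ (β - 1) : ℝ) : ℂ) * Δ‖
            + ‖(((r₁ ^ (β - 1) - r₂ ^ (β - 1) : ℝ)) : ℂ) * ζ₂‖ := by
            rw [hsplit]; exact norm_add_le _ _
        _ = r₁ ^ (β - 1) * ‖Δ‖ + |r₁ ^ (β - 1) - r₂ ^ (β - 1)| * r₂ := by
            rw [norm_mul, norm_mul, Complex.norm_real, Complex.norm_real,
              Real.norm_eq_abs, Real.norm_eq_abs,
              _root_.abs_of_nonneg (Real.rpow_nonneg h1pos.le _)]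
        _ ≤ (2 * r ^ (β - 1)) * ‖Δ‖ + (4 * r ^ (β - 2) * ‖Δ‖) * (3*r/2) := by
            gcongr
        _ = 2 * r ^ (β - 1) * ‖Δ‖ + 6 * (r ^ (β - 2) * r) * ‖Δ‖ := by ring
        _ = 8 * r ^ (β - 1) * ‖Δ‖ := by rw [hrr]; ring
    have hgα : ‖g₁ - g₂‖ ^ α ≤ 8 * r ^ (α*(β - 1)) * ‖Δ‖ ^ α := by
      calc ‖g₁ - g₂‖ ^ α ≤ (8 * r ^ (β - 1) * ‖Δ‖) ^ α :=
            Real.rpow_le_rpow (norm_nonneg _) hg12 hα0.le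
        _ = 8 ^ α * (r ^ (β - 1)) ^ α * ‖Δ‖ ^ α := by
            rw [Real.mul_rpow (by positivity) (norm_nonneg _),
              Real.mul_rpow (by norm_num) (hrpow_nonneg _)]
        _ ≤ 8 * r ^ (α*(β - 1)) * ‖Δ‖ ^ α := by
            have h8 : (8:ℝ) ^ α ≤ 8 := by
              calc (8:ℝ) ^ α ≤ 8 ^ (1:ℝ) :=
                    Real.rpow_le_rpow_of_exponent_le (by norm_num) hα1.le
                _ = 8 := Real.rpow_one 8
            have hre : (r ^ (β - 1)) ^ α = r ^ (α*(β - 1)) := by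
              rw [← Real.rpow_mul hr.le]; congr 1; ring
            rw [hre]
            gcongr
    have ha1 : r₁ ^ (2*β - 2) ≤ 4 * r ^ (2*β - 2) := by
      calc r₁ ^ (2*β - 2) ≤ (r/2) ^ (2*β - 2) :=
            Real.rpow_le_rpow_of_nonpos hr2 h1lo (by linarith)
        _ = 2 ^ (-(2*β - 2)) * r ^ (2*β - 2) := half_rpow_aux hr _
        _ ≤ 4 * r ^ (2*β - 2) := by
            have h2b : (2:ℝ) ^ (-(2*β - 2)) ≤ 2 ^ (2:ℕ) :=
              two_rpow_le_aux (by push_cast; linarith)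
            have := mul_le_mul_of_nonneg_right h2b (hrpow_nonneg (2*β - 2))
            simpa [show ((2:ℝ)^(2:ℕ) : ℝ) = 4 from by norm_num] using this
    have hA : ‖(r₁ ^ (2*β - 2) : ℝ) • (ft g₁ - ft g₂)‖
        ≤ 32 * M * (r ^ (2*β - 2) * r ^ (α*(β - 1))) * ‖Δ‖ ^ α := by
      rw [norm_smul, Real.norm_eq_abs, _root_.abs_of_nonneg (Real.rpow_nonneg h1pos.le _)]
      have hfg : ‖ft g₁ - ft g₂‖ ≤ M * (8 * r ^ (α*(β - 1)) * ‖Δ‖ ^ α) :=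
        (hM _ hg₁b _ hg₂b).trans (mul_le_mul_of_nonneg_left hgα hM0)
      calc r₁ ^ (2*β - 2) * ‖ft g₁ - ft g₂‖
          ≤ (4 * r ^ (2*β - 2)) * (M * (8 * r ^ (α*(β - 1)) * ‖Δ‖ ^ α)) :=
            mul_le_mul ha1 hfg (norm_nonneg _) (by positivity)
        _ = 32 * M * (r ^ (2*β - 2) * r ^ (α*(β - 1))) * ‖Δ‖ ^ α := by ring
    have hb1 : |r₁ ^ (2*β - 2) - r₂ ^ (2*β - 2)| ≤ 16 * r ^ (2*β - 3) * ‖Δ‖ := by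
      have hmvt := rpow_lip_aux (p := 2*β - 2) (by linarith) hr2 h1lo h2lo
      have hhalf : (r/2) ^ (2*β - 2 - 1) ≤ 8 * r ^ (2*β - 3) := by
        rw [half_rpow_aux hr, show 2*β - 2 - 1 = 2*β - 3 from by ring]
        have h2b : (2:ℝ) ^ (-(2*β - 3)) ≤ 2 ^ (3:ℕ) :=
          two_rpow_le_aux (by push_cast; linarith)
        have := mul_le_mul_of_nonneg_right h2b (hrpow_nonneg (2*β - 3))
        simpa [show ((2:ℝ)^(3:ℕ) : ℝ) = 8 from by norm_num] using this
      calc |r₁ ^ (2*β - 2) - r₂ ^ (2*β - 2)|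
          ≤ (-(2*β - 2)) * (r/2) ^ (2*β - 2 - 1) * |r₁ - r₂| := hmvt
        _ ≤ 2 * (8 * r ^ (2*β - 3)) * ‖Δ‖ := by
            have hhp : (0:ℝ) ≤ (r/2) ^ (2*β - 2 - 1) := Real.rpow_nonneg hr2.le _
            gcongr <;> linarith
        _ = 16 * r ^ (2*β - 3) * ‖Δ‖ := by ring
    have hvw : ‖ft g₂ - ft 0‖ ≤ M * (2 * r ^ (β*α)) := by
      have h1 : ‖ft g₂ - ft 0‖ ≤ M * ‖g₂ - 0‖ ^ α := hM _ hg₂b _ h0ball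
      rw [sub_zero, hg₂n] at h1
      have h2 : (r₂ ^ β) ^ α = r₂ ^ (β*α) := (Real.rpow_mul h2pos.le β α).symm
      rw [h2] at h1
      refine h1.trans (mul_le_mul_of_nonneg_left ?_ hM0)
      calc r₂ ^ (β*α) ≤ (2*r) ^ (β*α) := by
            apply Real.rpow_le_rpow h2pos.le (by linarith)
            positivity
        _ = 2 ^ (β*α) * r ^ (β*α) := Real.mul_rpow (by norm_num) hr.le
        _ ≤ 2 * r ^ (β*α) := by
            have h2b : (2:ℝ) ^ (β*α) ≤ 2 ^ (1:ℕ) :=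
              two_rpow_le_aux (by
                push_cast
                have h := mul_lt_mul_of_pos_right hβ1 hα0
                linarith)
            have := mul_le_mul_of_nonneg_right h2b (hrpow_nonneg (β*α))
            simpa using this
    have hΔα : ‖Δ‖ ≤ r ^ (1 - α) * ‖Δ‖ ^ α := by
      have h1 : ‖Δ‖ ^ α * ‖Δ‖ ^ (1 - α) = ‖Δ‖ := by
        rw [← Real.rpow_add hΔpos, show α + (1 - α) = (1:ℝ) from by ring, Real.rpow_one]
      have h2 : ‖Δ‖ ^ (1 - α) ≤ r ^ (1 - α) :=
        Real.rpow_le_rpow (norm_nonneg _) hΔler (by linarith)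
      calc ‖Δ‖ = ‖Δ‖ ^ α * ‖Δ‖ ^ (1 - α) := h1.symm
        _ ≤ ‖Δ‖ ^ α * r ^ (1 - α) := by
            exact mul_le_mul_of_nonneg_left h2 (Real.rpow_nonneg (norm_nonneg _) _)
        _ = r ^ (1 - α) * ‖Δ‖ ^ α := by ring
    have hB : ‖((r₁ ^ (2*β - 2) - r₂ ^ (2*β - 2) : ℝ)) • (ft g₂ - ft 0)‖
        ≤ 32 * M * (r ^ (2*β - 3) * r ^ (β*α) * r ^ (1 - α)) * ‖Δ‖ ^ α := by
      rw [norm_smul, Real.norm_eq_abs]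
      calc |r₁ ^ (2*β - 2) - r₂ ^ (2*β - 2)| * ‖ft g₂ - ft 0‖
          ≤ (16 * r ^ (2*β - 3) * ‖Δ‖) * (M * (2 * r ^ (β*α))) :=
            mul_le_mul hb1 hvw (norm_nonneg _) (by positivity)
        _ = 32 * M * (r ^ (2*β - 3) * r ^ (β*α)) * ‖Δ‖ := by ring
        _ ≤ 32 * M * (r ^ (2*β - 3) * r ^ (β*α)) * (r ^ (1 - α) * ‖Δ‖ ^ α) := by
            exact mul_le_mul_of_nonneg_left hΔα (by positivity)
        _ = 32 * M * (r ^ (2*β - 3) * r ^ (β*α) * r ^ (1 - α)) * ‖Δ‖ ^ α := by ring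
    have hsplit2 : (r₁ ^ (2*β - 2) : ℝ) • (ft g₁ - ft 0)
          - (r₂ ^ (2*β - 2) : ℝ) • (ft g₂ - ft 0)
        = (r₁ ^ (2*β - 2) : ℝ) • (ft g₁ - ft g₂)
          + ((r₁ ^ (2*β - 2) - r₂ ^ (2*β - 2) : ℝ)) • (ft g₂ - ft 0) := by
      simp only [Complex.real_smul]; push_cast; ring
    have hc1 : r ^ (2*β - 2) * r ^ (α*(β - 1)) = r ^ (2*β - 2 + α*(β - 1)) := by
      rw [← Real.rpow_add hr]
    have hc2 : r ^ (2*β - 3) * r ^ (β*α) * r ^ (1 - α) = r ^ (2*β - 2 + α*(β - 1)) := by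
      rw [← Real.rpow_add hr, ← Real.rpow_add hr]; congr 1; ring
    calc ‖(r₁ ^ (2*β - 2) : ℝ) • (ft g₁ - ft 0)
            - (r₂ ^ (2*β - 2) : ℝ) • (ft g₂ - ft 0)‖
        ≤ ‖(r₁ ^ (2*β - 2) : ℝ) • (ft g₁ - ft g₂)‖
          + ‖((r₁ ^ (2*β - 2) - r₂ ^ (2*β - 2) : ℝ)) • (ft g₂ - ft 0)‖ := by
          rw [hsplit2]; exact norm_add_le _ _
      _ ≤ 32 * M * (r ^ (2*β - 2) * r ^ (α*(β - 1))) * ‖Δ‖ ^ α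
          + 32 * M * (r ^ (2*β - 3) * r ^ (β*α) * r ^ (1 - α)) * ‖Δ‖ ^ α :=
          add_le_add hA hB
      _ = 64 * M * r ^ (2*β - 2 + α*(β - 1)) * ‖Δ‖ ^ α := by
          rw [hc1, hc2]; ring
      _ ≤ 64 * (M + 1) * r ^ (2*β - 2 + α*(β - 1)) * ‖Δ‖ ^ α := by
          have h1 := hrpow_nonneg (2*β - 2 + α*(β - 1))
          have h2 : (0:ℝ) ≤ ‖Δ‖ ^ α := Real.rpow_nonneg (norm_nonneg _) _
          have h3 : (64:ℝ) * M ≤ 64 * (M + 1) := by linarith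
          exact mul_le_mul_of_nonneg_right (mul_le_mul_of_nonneg_right h3 h1) h2
end
end

section
/- For every γ ∈ (−2,−1) there exists C > 0 (depending only on γ) such that for all ζ₀ ∈ B_{1/4}(0)∖{0} ⊆ ℂ: ∫_{B_{1/2}(0)} |ζ − ζ₀|^{−1}·|ζ|^{γ} dA(ζ) ≤ C·|ζ₀|^{γ+1}, where dA denotes the Lebesgue (area) measure on ℂ ≅ ℝ². -/
/-!
STATEMENT 17: the singular-integral estimate
∫_{B_{1/2}(0)} |ζ − ζ₀|^{−1}|ζ|^γ dA(ζ) ≤ C|ζ₀|^{γ+1} for γ ∈ (−2,−1)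
and ζ₀ ∈ B_{1/4}(0)∖{0}, with C depending only on γ.
-/

open Complex Metric MeasureTheory

open Set Measure
open scoped ENNReal NNReal

lemma lintegral_norm_complex (f : ℝ → ℝ≥0∞) (hf : Measurable f) :
    ∫⁻ x : ℂ, f ‖x‖ = 2 * (NNReal.pi : ℝ≥0∞) * ∫⁻ y in Ioi (0:ℝ), ENNReal.ofReal y * f y := by
  have h1 : ∫⁻ x : ℂ, f ‖x‖
      = ∫⁻ x : ({(0:ℂ)}ᶜ : Set ℂ), f ‖x.1‖ ∂(volume.comap Subtype.val) := by
    rw [lintegral_subtype_comap (measurableSet_singleton (0:ℂ)).compl (fun x => f ‖x‖),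
      restrict_compl_singleton]
  have h2 : ∫⁻ x : ({(0:ℂ)}ᶜ : Set ℂ), f ‖x.1‖ ∂(volume.comap Subtype.val)
      = ∫⁻ b : sphere (0:ℂ) 1 × Ioi (0:ℝ), f b.2
          ∂(volume.toSphere.prod (volumeIoiPow (Module.finrank ℝ ℂ - 1))) :=
    by
      have := (volume.measurePreserving_homeomorphUnitSphereProd (E := ℂ)).lintegral_comp_emb
        (Homeomorph.measurableEmbedding _)
        (fun p : sphere (0:ℂ) 1 × Ioi (0:ℝ) => f p.2)
      simp only [homeomorphUnitSphereProd_apply_snd_coe, div_one] at this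
      exact this
  rw [h1, h2]
  have hm : Measurable (fun p : sphere (0:ℂ) 1 × Ioi (0:ℝ) => f p.2) :=
    hf.comp (measurable_subtype_coe.comp measurable_snd)
  rw [lintegral_prod _ hm.aemeasurable]
  simp only [lintegral_const]
  rw [Measure.toSphere_apply_univ]
  have hdim : Module.finrank ℝ ℂ = 2 := Complex.finrank_real_complex
  rw [hdim]
  have hb : (volume (ball (0:ℂ) 1)) = (NNReal.pi : ℝ≥0∞) := by
    simp [Complex.volume_ball]
  rw [hb]
  have h3 : ∫⁻ y : Ioi (0:ℝ), f y ∂(Measure.volumeIoiPow (2-1))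
      = ∫⁻ y in Ioi (0:ℝ), ENNReal.ofReal y * f y := by
    rw [Measure.volumeIoiPow,
      lintegral_withDensity_eq_lintegral_mul _
        (f := fun r : Ioi (0:ℝ) => ENNReal.ofReal (r.1 ^ (2-1)))
        (g := fun y : Ioi (0:ℝ) => f y.1)
        (by fun_prop) (hf.comp measurable_subtype_coe)]
    simp only [Pi.mul_apply]
    rw [show (2-1 : ℕ) = 1 from rfl]
    rw [lintegral_subtype_comap measurableSet_Ioi (fun y => ENNReal.ofReal (y ^ 1) * f y)]
    simp [pow_one]
  rw [h3]
  ring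

section pieces

variable {γ t : ℝ}

lemma J1 (ht : 0 < t) (hγ1 : (-2:ℝ) < γ) (hγ2 : γ < -1) :
    ∫⁻ y in Ioi (0:ℝ), ENNReal.ofReal y
        * (Iio t).indicator (fun y => ENNReal.ofReal (t⁻¹ * y ^ γ)) y
      = ENNReal.ofReal (t⁻¹ * (t ^ (γ+2) / (γ+2))) := by
  have hcong : ∀ y : ℝ, ENNReal.ofReal y
        * (Iio t).indicator (fun y => ENNReal.ofReal (t⁻¹ * y ^ γ)) y
      = (Iio t).indicator
          (fun y => ENNReal.ofReal y * ENNReal.ofReal (t⁻¹ * y ^ γ)) y := by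
    intro y
    by_cases h : y ∈ Iio t <;> simp [indicator, h]
  rw [lintegral_congr hcong, lintegral_indicator measurableSet_Iio,
    Measure.restrict_restrict measurableSet_Iio, Set.Iio_inter_Ioi]
  have hcong2 : ∀ y ∈ Ioo (0:ℝ) t,
      ENNReal.ofReal y * ENNReal.ofReal (t⁻¹ * y ^ γ)
        = ENNReal.ofReal (t⁻¹ * y ^ (γ+1)) := by
    intro y hy
    rw [← ENNReal.ofReal_mul hy.1.le]
    congr 1
    rw [Real.rpow_add_one hy.1.ne']
    ring
  rw [setLIntegral_congr_fun measurableSet_Ioo hcong2]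
  have hint : IntegrableOn (fun y : ℝ => t⁻¹ * y ^ (γ+1)) (Ioo 0 t) := by
    refine Integrable.const_mul ?_ _
    exact ((intervalIntegral.intervalIntegrable_rpow' (by linarith)).1).mono_set
      Ioo_subset_Ioc_self
  rw [← ofReal_integral_eq_lintegral_ofReal hint]
  · congr 1
    rw [integral_const_mul]
    congr 1
    rw [Measure.restrict_congr_set Ioo_ae_eq_Ioc, ← intervalIntegral.integral_of_le ht.le,
      integral_rpow (Or.inl (by linarith))]
    rw [Real.zero_rpow (by linarith : γ + 1 + 1 ≠ 0)]
    ring_nf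
  · filter_upwards [ae_restrict_mem measurableSet_Ioo] with y hy
    have : (0:ℝ) ≤ y ^ (γ+1) := Real.rpow_nonneg hy.1.le _
    positivity

lemma J2 (ht : 0 < t) :
    ∫⁻ y in Ioi (0:ℝ), ENNReal.ofReal y
        * (Iio t).indicator (fun y => ENNReal.ofReal (t ^ γ * y⁻¹)) y
      = ENNReal.ofReal (t ^ γ * t) := by
  have hcong : ∀ y : ℝ, ENNReal.ofReal y
        * (Iio t).indicator (fun y => ENNReal.ofReal (t ^ γ * y⁻¹)) y
      = (Iio t).indicator
          (fun y => ENNReal.ofReal y * ENNReal.ofReal (t ^ γ * y⁻¹)) y := by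
    intro y
    by_cases h : y ∈ Iio t <;> simp [indicator, h]
  rw [lintegral_congr hcong, lintegral_indicator measurableSet_Iio,
    Measure.restrict_restrict measurableSet_Iio, Set.Iio_inter_Ioi]
  have hcong2 : ∀ y ∈ Ioo (0:ℝ) t,
      ENNReal.ofReal y * ENNReal.ofReal (t ^ γ * y⁻¹)
        = ENNReal.ofReal (t ^ γ) := by
    intro y hy
    rw [← ENNReal.ofReal_mul hy.1.le]
    congr 1
    field_simp [hy.1.ne']
  rw [setLIntegral_congr_fun measurableSet_Ioo hcong2,
    setLIntegral_const, Real.volume_Ioo, sub_zero,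
    ← ENNReal.ofReal_mul (Real.rpow_nonneg ht.le _)]

lemma J3 (ht : 0 < t) (hγ2 : γ < -1) :
    ∫⁻ y in Ioi (0:ℝ), ENNReal.ofReal y
        * (Ici t).indicator (fun y => ENNReal.ofReal (3 * y ^ (γ-1))) y
      = ENNReal.ofReal (3 * (-t ^ (γ+1) / (γ+1))) := by
  have hcong : ∀ y : ℝ, ENNReal.ofReal y
        * (Ici t).indicator (fun y => ENNReal.ofReal (3 * y ^ (γ-1))) y
      = (Ici t).indicator
          (fun y => ENNReal.ofReal y * ENNReal.ofReal (3 * y ^ (γ-1))) y := by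
    intro y
    by_cases h : y ∈ Ici t <;> simp [indicator, h]
  rw [lintegral_congr hcong, lintegral_indicator measurableSet_Ici,
    Measure.restrict_restrict measurableSet_Ici]
  have hIci : Ici t ∩ Ioi (0:ℝ) = Ici t :=
    Set.inter_eq_left.mpr (fun y hy => lt_of_lt_of_le ht hy)
  rw [hIci]
  have hcong2 : ∀ y ∈ Ici t,
      ENNReal.ofReal y * ENNReal.ofReal (3 * y ^ (γ-1))
        = ENNReal.ofReal (3 * y ^ γ) := by
    intro y hy
    have hy0 : 0 < y := lt_of_lt_of_le ht hy
    rw [← ENNReal.ofReal_mul hy0.le]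
    congr 1
    rw [show γ = (γ - 1) + 1 by ring, Real.rpow_add_one hy0.ne']
    ring_nf
  rw [setLIntegral_congr_fun measurableSet_Ici hcong2,
    Measure.restrict_congr_set Ioi_ae_eq_Ici.symm]
  have hint : IntegrableOn (fun y : ℝ => 3 * y ^ γ) (Ioi t) :=
    Integrable.const_mul (integrableOn_Ioi_rpow_of_lt hγ2 ht) _
  rw [← ofReal_integral_eq_lintegral_ofReal hint]
  · congr 1
    rw [integral_const_mul, integral_Ioi_rpow_of_lt hγ2 ht]
  · filter_upwards [ae_restrict_mem measurableSet_Ioi] with y hy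
    have : (0:ℝ) ≤ y ^ γ := Real.rpow_nonneg (le_of_lt (ht.trans hy)) _
    positivity

end pieces

theorem singular_integral_estimate
    (γ : ℝ) (hγ : γ ∈ Set.Ioo (-2 : ℝ) (-1)) :
    ∃ C > (0:ℝ), ∀ ζ₀ : ℂ, ζ₀ ∈ Metric.ball (0:ℂ) (1/4) → ζ₀ ≠ 0 →
      ∫ ζ in Metric.ball (0:ℂ) (1/2), ‖ζ - ζ₀‖⁻¹ * ‖ζ‖ ^ γ
        ≤ C * ‖ζ₀‖ ^ (γ + 1) := by
  obtain ⟨hγ1, hγ2⟩ := hγ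
  have hπ : (0:ℝ) < Real.pi := Real.pi_pos
  have hd2 : (0:ℝ) < γ + 2 := by linarith
  have hd1 : (0:ℝ) < -(γ + 1) := by linarith
  set K : ℝ := 2 * Real.pi * (1/(γ+2) + 1 - 3/(γ+1)) with hK
  have hKpos : 0 < K := by
    have hA : 0 < 1/(γ+2) := by positivity
    have hB : 3/(γ+1) < 0 := div_neg_of_pos_of_neg (by norm_num) (by linarith)
    have : 0 < 1/(γ+2) + 1 - 3/(γ+1) := by linarith
    positivity
  refine ⟨K * (1/2:ℝ) ^ (γ+1), by positivity, ?_⟩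
  intro ζ₀ hζ₀ hne
  set s : ℝ := ‖ζ₀‖ with hs_def
  have hs : 0 < s := norm_pos_iff.mpr hne
  set t : ℝ := s / 2 with ht_def
  have ht : 0 < t := by positivity
  -- the three bounding functions
  set f1 : ℝ → ℝ≥0∞ := (Iio t).indicator (fun y => ENNReal.ofReal (t⁻¹ * y ^ γ)) with hf1
  set f2 : ℝ → ℝ≥0∞ := (Iio t).indicator (fun y => ENNReal.ofReal (t ^ γ * y⁻¹)) with hf2
  set f3 : ℝ → ℝ≥0∞ := (Ici t).indicator (fun y => ENNReal.ofReal (3 * y ^ (γ-1))) with hf3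
  have mf1 : Measurable f1 := Measurable.indicator (by fun_prop) measurableSet_Iio
  have mf2 : Measurable f2 := Measurable.indicator (by fun_prop) measurableSet_Iio
  have mf3 : Measurable f3 := Measurable.indicator (by fun_prop) measurableSet_Ici
  -- pointwise bound
  have hpt : ∀ ζ : ℂ, ENNReal.ofReal (‖ζ - ζ₀‖⁻¹ * ‖ζ‖ ^ γ)
      ≤ f1 ‖ζ‖ + f2 ‖ζ - ζ₀‖ + f3 ‖ζ‖ := by
    intro ζ
    rcases lt_or_ge ‖ζ‖ t with hA | hBC
    · -- case A : ‖ζ‖ < t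
      have hw : t ≤ ‖ζ - ζ₀‖ := by
        have h1 : ‖ζ₀‖ - ‖ζ‖ ≤ ‖ζ₀ - ζ‖ := norm_sub_norm_le _ _
        rw [norm_sub_rev] at h1
        have : s = 2 * t := by rw [ht_def]; ring
        linarith
      have hb : ENNReal.ofReal (‖ζ - ζ₀‖⁻¹ * ‖ζ‖ ^ γ)
          ≤ f1 ‖ζ‖ := by
        rw [hf1, Set.indicator_of_mem (by exact hA)]
        refine ENNReal.ofReal_le_ofReal ?_
        refine mul_le_mul_of_nonneg_right ?_ (Real.rpow_nonneg (norm_nonneg _) _)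
        exact inv_anti₀ ht hw
      exact hb.trans (le_self_add.trans le_self_add)
    rcases lt_or_ge ‖ζ - ζ₀‖ t with hB | hC
    · -- case B
      have hb : ENNReal.ofReal (‖ζ - ζ₀‖⁻¹ * ‖ζ‖ ^ γ)
          ≤ f2 ‖ζ - ζ₀‖ := by
        rw [hf2, Set.indicator_of_mem (by exact hB)]
        refine ENNReal.ofReal_le_ofReal ?_
        rw [mul_comm]
        exact mul_le_mul_of_nonneg_right
          (Real.rpow_le_rpow_of_nonpos ht hBC (by linarith)) (inv_nonneg.mpr (norm_nonneg _))
      exact hb.trans (le_add_self.trans le_self_add)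
    · -- case C
      have hz : 0 < ‖ζ‖ := ht.trans_le hBC
      have h3 : ‖ζ‖ ≤ 3 * ‖ζ - ζ₀‖ := by
        have h1 : ‖ζ‖ ≤ ‖ζ - ζ₀‖ + ‖ζ₀‖ := by
          calc ‖ζ‖ = ‖(ζ - ζ₀) + ζ₀‖ := by ring_nf
          _ ≤ ‖ζ - ζ₀‖ + ‖ζ₀‖ := norm_add_le _ _
        have : s = 2 * t := by rw [ht_def]; ring
        linarith
      have hb : ENNReal.ofReal (‖ζ - ζ₀‖⁻¹ * ‖ζ‖ ^ γ) ≤ f3 ‖ζ‖ := by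
        rw [hf3, Set.indicator_of_mem (by exact hBC)]
        refine ENNReal.ofReal_le_ofReal ?_
        have h5 : ‖ζ - ζ₀‖⁻¹ ≤ (‖ζ‖ / 3)⁻¹ :=
          inv_anti₀ (by positivity) (by linarith)
        calc ‖ζ - ζ₀‖⁻¹ * ‖ζ‖ ^ γ
            ≤ (‖ζ‖ / 3)⁻¹ * ‖ζ‖ ^ γ :=
          mul_le_mul_of_nonneg_right h5 (Real.rpow_nonneg (norm_nonneg _) _)
        _ = 3 * ‖ζ‖ ^ (γ - 1) := by
            rw [Real.rpow_sub hz, Real.rpow_one]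
            field_simp
      exact hb.trans le_add_self
  -- measurability of integrand
  have hg_meas : Measurable (fun ζ : ℂ => ‖ζ - ζ₀‖⁻¹ * ‖ζ‖ ^ γ) := by fun_prop
  have hnn : 0 ≤ᵐ[volume.restrict (Metric.ball (0:ℂ) (1/2))]
      fun ζ : ℂ => ‖ζ - ζ₀‖⁻¹ * ‖ζ‖ ^ γ := by
    refine Filter.Eventually.of_forall fun ζ => ?_
    positivity
  rw [integral_eq_lintegral_of_nonneg_ae hnn hg_meas.aestronglyMeasurable]
  -- the key lintegral bound
  have hle : ∫⁻ ζ in Metric.ball (0:ℂ) (1/2), ENNReal.ofReal (‖ζ - ζ₀‖⁻¹ * ‖ζ‖ ^ γ)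
      ≤ ENNReal.ofReal (K * (1/2:ℝ) ^ (γ+1) * s ^ (γ+1)) := by
    calc ∫⁻ ζ in Metric.ball (0:ℂ) (1/2), ENNReal.ofReal (‖ζ - ζ₀‖⁻¹ * ‖ζ‖ ^ γ)
        ≤ ∫⁻ ζ : ℂ, ENNReal.ofReal (‖ζ - ζ₀‖⁻¹ * ‖ζ‖ ^ γ) :=
          lintegral_mono' Measure.restrict_le_self le_rfl
      _ ≤ ∫⁻ ζ : ℂ, (f1 ‖ζ‖ + f2 ‖ζ - ζ₀‖ + f3 ‖ζ‖) := lintegral_mono hpt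
      _ = (∫⁻ ζ : ℂ, f1 ‖ζ‖) + (∫⁻ ζ : ℂ, f2 ‖ζ - ζ₀‖) + ∫⁻ ζ : ℂ, f3 ‖ζ‖ := by
          rw [lintegral_add_right _ (show Measurable fun ζ : ℂ => f3 ‖ζ‖ from
              mf3.comp measurable_norm),
            lintegral_add_right _ (show Measurable fun ζ : ℂ => f2 ‖ζ - ζ₀‖ from
              mf2.comp (measurable_norm.comp (measurable_id.sub measurable_const)))]
      _ = (∫⁻ ζ : ℂ, f1 ‖ζ‖) + (∫⁻ ζ : ℂ, f2 ‖ζ‖) + ∫⁻ ζ : ℂ, f3 ‖ζ‖ := by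
          congr 1
          congr 1
          have := lintegral_sub_right_eq_self (μ := (volume : Measure ℂ))
            (fun ζ : ℂ => f2 ‖ζ‖) ζ₀
          exact this
      _ = 2 * (NNReal.pi : ℝ≥0∞) *
            ((∫⁻ y in Ioi (0:ℝ), ENNReal.ofReal y * f1 y)
              + (∫⁻ y in Ioi (0:ℝ), ENNReal.ofReal y * f2 y)
              + ∫⁻ y in Ioi (0:ℝ), ENNReal.ofReal y * f3 y) := by
          rw [lintegral_norm_complex f1 mf1, lintegral_norm_complex f2 mf2,
            lintegral_norm_complex f3 mf3]
          ring
      _ = 2 * (NNReal.pi : ℝ≥0∞) *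
            (ENNReal.ofReal (t⁻¹ * (t ^ (γ+2) / (γ+2))) + ENNReal.ofReal (t ^ γ * t)
              + ENNReal.ofReal (3 * (-t ^ (γ+1) / (γ+1)))) := by
          rw [hf1, hf2, hf3, J1 ht hγ1 hγ2, J2 ht, J3 ht hγ2]
      _ = ENNReal.ofReal (K * (1/2:ℝ) ^ (γ+1) * s ^ (γ+1)) := by
          have hpi : (NNReal.pi : ℝ≥0∞) = ENNReal.ofReal Real.pi := by
            rw [← NNReal.coe_real_pi, ENNReal.ofReal_coe_nnreal]
          have h2 : (2 : ℝ≥0∞) = ENNReal.ofReal 2 := by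
            rw [ENNReal.ofReal_ofNat]
          have ha1 : (0:ℝ) ≤ t⁻¹ * (t ^ (γ+2) / (γ+2)) := by
            have := Real.rpow_nonneg ht.le (γ+2); positivity
          have ha2 : (0:ℝ) ≤ t ^ γ * t := by
            have := Real.rpow_nonneg ht.le γ; positivity
          have ha3 : (0:ℝ) ≤ 3 * (-t ^ (γ+1) / (γ+1)) := by
            have h := Real.rpow_nonneg ht.le (γ+1)
            have : 0 ≤ -t ^ (γ+1) / (γ+1) := by
              rw [div_nonneg_iff]
              right
              constructor <;> [linarith; linarith]
            linarith
          rw [hpi, h2, ← ENNReal.ofReal_mul (by norm_num),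
            ← ENNReal.ofReal_add ha1 ha2, ← ENNReal.ofReal_add (by linarith) ha3,
            ← ENNReal.ofReal_mul (by positivity)]
          congr 1
          -- pure real computation
          have e1 : t ^ (γ+2) = t ^ (γ+1) * t := by
            rw [show γ+2 = (γ+1)+1 by ring, Real.rpow_add_one ht.ne']
          have e2 : t ^ γ * t = t ^ (γ+1) := (Real.rpow_add_one ht.ne' γ).symm
          have e3 : t ^ (γ+1) = s ^ (γ+1) * (1/2:ℝ) ^ (γ+1) := by
            rw [show t = s * (1/2) by rw [ht_def]; ring,
              Real.mul_rpow hs.le (by norm_num)]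
          rw [e1, e2, e3, hK]
          have hne1 : γ + 1 ≠ 0 := by linarith
          have hne2 : γ + 2 ≠ 0 := by linarith
          field_simp
          ring
  have hfin : (0:ℝ) ≤ K * (1/2:ℝ) ^ (γ+1) * s ^ (γ+1) := by positivity
  calc (∫⁻ ζ in Metric.ball (0:ℂ) (1/2),
        ENNReal.ofReal (‖ζ - ζ₀‖⁻¹ * ‖ζ‖ ^ γ)).toReal
      ≤ K * (1/2:ℝ) ^ (γ+1) * s ^ (γ+1) := ENNReal.toReal_le_of_le_ofReal hfin hle
    _ = K * (1/2:ℝ) ^ (γ+1) * ‖ζ₀‖ ^ (γ+1) := by rw [hs_def]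
end
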